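/- arXiv:2304.12565 — 7 statements merged into one kernel-verified Lean document; each statement's English description precedes it below -/
import Mathlib

section
/- Let k be a positive integer and n an even positive integer. If G is a connected graph on n vertices with at least C(n-1,2) + 2k edges, then either every matching of size k in G extends to a perfect matching of G, or G is isomorphic to the join of K_{2k} with the disjoint union of K_{n-2k-1} and K_1, or G is isomorphic to the join of K_{2k+1} with three isolated vertices. -/
open SimpleGraph

/-- The join of two simple graphs: their disjoint union together with all
edges between the two parts. -/
def gJoin {α β : Type*} (G : SimpleGraph α) (H : SimpleGraph β) : SimpleGraph (α ⊕ β) :=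
  (G ⊕g H) ⊔ SimpleGraph.fromRel (fun x y => x.isLeft ∧ y.isRight)

/-- `G` is `k`-extendable: every matching of size `k` in `G` extends to a
perfect matching of `G`. -/
def kExtendable {V : Type*} (G : SimpleGraph V) (k : ℕ) : Prop :=
  ∀ M : G.Subgraph, M.IsMatching → M.edgeSet.ncard = k →
    ∃ P : G.Subgraph, P.IsPerfectMatching ∧ M.edgeSet ⊆ P.edgeSet

open Finset

/-!
The complement of `G` has at most `n - 1 - 2k` edges. Deleting the `2k` vertices covered by a
`k`-matching leaves an even set `s` spanning at most `#s - 1` edges of `Gᶜ`, and it suffices to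
find a matching of `G` covering exactly `s`. Removing both ends of an edge of `G` inside `s` that
meet as many edges of `Gᶜ` as possible preserves the bound `#s - 2`, so that case follows by
induction. With exactly `#s - 1` edges of `Gᶜ` one needs such an edge meeting three of them; it
exists unless some vertex of `s` is `Gᶜ`-adjacent to all of `s`, or `#s = 4` and `Gᶜ` spans a
triangle in `s`. In both exceptional cases these are already all the edges of `Gᶜ`, which pins `G`
down as one of the two joins.
-/

theorem Finset.card_erase_erase_add_two {V : Type*} [DecidableEq V] {s : Finset V} {u v : V}
    (hv : v ∈ s) (hu : u ∈ s) (hvu : v ≠ u) : #((s.erase v).erase u) + 2 = #s := by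
  rw [← card_erase_add_one hv, ← card_erase_add_one (mem_erase.2 ⟨hvu.symm, hu⟩)]

theorem Finset.exists_embedding_fin_forall_mem {V : Type*} {s : Finset V} {a : ℕ} (h : #s = a) :
    ∃ f : Fin a ↪ V, ∀ i, f i ∈ s :=
  ⟨(s.equivFinOfCardEq h).symm.toEmbedding.trans (.subtype _),
    fun i ↦ ((s.equivFinOfCardEq h).symm i).2⟩

namespace SimpleGraph

section Matching

variable {V : Type*} {G : SimpleGraph V} {M M' : G.Subgraph}

theorem Subgraph.IsMatching.ncard_verts [Finite V] (h : M.IsMatching) :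
    M.verts.ncard = 2 * M.edgeSet.ncard := by
  classical
  have := Fintype.ofFinite V
  rw [isMatching_iff_forall_degree] at h
  rw [← image_coe_edgeSet_coe,
    Set.ncard_image_of_injective _ (Sym2.map.injective Subtype.val_injective), ← coe_edgeFinset,
    Set.ncard_coe_finset, ← sum_degrees_eq_twice_card_edges, Set.ncard_eq_toFinset_card',
    Set.toFinset_card, ← Finset.card_univ, Finset.card_eq_sum_ones]
  refine Finset.sum_congr rfl fun x _ ↦ ?_
  rw [M.coe_degree]
  convert (h x x.2).symm

theorem Subgraph.IsMatching.isPerfectMatching_sup (hM : M.IsMatching) (hM' : M'.IsMatching)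
    (h : M'.verts = M.vertsᶜ) : (M ⊔ M').IsPerfectMatching := by
  refine ⟨hM.sup hM' ?_, fun v ↦ ?_⟩
  · rw [hM.support_eq_verts, hM'.support_eq_verts, h]
    exact disjoint_compl_right
  · simp [h]

theorem Subgraph.IsMatching.sup_subgraphOfAdj {u v : V} (hM : M.IsMatching) (h : G.Adj v u)
    (hv : v ∉ M.verts) (hu : u ∉ M.verts) : (M ⊔ G.subgraphOfAdj h).IsMatching := by
  refine hM.sup (.subgraphOfAdj h) ?_
  rw [hM.support_eq_verts, (IsMatching.subgraphOfAdj h).support_eq_verts, subgraphOfAdj_verts]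
  simp [hv, hu]

theorem exists_isMatching_verts_eq_of_erase_erase [DecidableEq V] {s : Finset V} {u v : V}
    (hv : v ∈ s) (hu : u ∈ s) (hvu : G.Adj v u)
    (h : ∃ M : G.Subgraph, M.IsMatching ∧ M.verts = ↑((s.erase v).erase u)) :
    ∃ M : G.Subgraph, M.IsMatching ∧ M.verts = s := by
  obtain ⟨M, hM, hMv⟩ := h
  refine ⟨M ⊔ G.subgraphOfAdj hvu, hM.sup_subgraphOfAdj hvu (by simp [hMv]) (by simp [hMv]), ?_⟩
  ext x
  simp only [Subgraph.verts_sup, hMv, subgraphOfAdj_verts, Set.mem_union, mem_coe, mem_erase,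
    Set.mem_insert_iff, Set.mem_singleton_iff]
  grind

end Matching

variable {V : Type*} [Fintype V] [DecidableEq V]

section EdgesIn

variable (F : SimpleGraph V) [DecidableRel F.Adj]

def edgeFinsetIn (s : Finset V) : Finset (Sym2 V) := F.edgeFinset ∩ s.sym2

def degreeIn (s : Finset V) (v : V) : ℕ := #(F.neighborFinset v ∩ s)

variable {F} {s : Finset V} {u v w : V}

theorem mk_mem_edgeFinsetIn : s(u, v) ∈ F.edgeFinsetIn s ↔ F.Adj u v ∧ u ∈ s ∧ v ∈ s := by
  simp [edgeFinsetIn]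

theorem card_edgeFinsetIn_erase_add_degreeIn (hv : v ∈ s) :
    #(F.edgeFinsetIn (s.erase v)) + F.degreeIn s v = #(F.edgeFinsetIn s) := by
  have hout : {e ∈ F.edgeFinsetIn s | v ∉ e} = F.edgeFinsetIn (s.erase v) := by
    ext e
    induction e with
    | _ x y =>
      simp only [mem_filter, mk_mem_edgeFinsetIn, Sym2.mem_iff, mem_erase]
      grind
  have hin : {e ∈ F.edgeFinsetIn s | v ∈ e} = (F.neighborFinset v ∩ s).image (s(v, ·)) := by
    ext e
    induction e with
    | _ x y =>
      simp only [mem_filter, mk_mem_edgeFinsetIn, Sym2.mem_iff, mem_image, mem_inter,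
        mem_neighborFinset, Sym2.eq_iff]
      grind [Adj.ne, adj_symm]
  rw [degreeIn, ← card_image_of_injective (F.neighborFinset v ∩ s) fun _ _ ↦ Sym2.congr_right.1,
    ← hout, ← hin, add_comm, card_filter_add_card_filter_not]

theorem sum_degreeIn_eq_two_mul_card_edgeFinsetIn :
    ∑ v ∈ s, F.degreeIn s v = 2 * #(F.edgeFinsetIn s) := by
  have hdeg (v : (s : Set V)) : F.degreeIn s v = (F.induce s).degree v := by
    rw [degreeIn, ← card_neighborFinset_eq_degree, ← card_map (.subtype (· ∈ (s : Set V)))]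
    congr 1
    ext u
    simp
  rw [edgeFinsetIn, ← filter_edgeFinset_toFinset_subset, card_filter_edgeFinset_toFinset_subset,
    ← sum_degrees_eq_twice_card_edges, ← Finset.sum_coe_sort s]
  exact Fintype.sum_congr _ _ hdeg

theorem degreeIn_erase_of_not_adj (h : ¬F.Adj v u) :
    F.degreeIn (s.erase u) v = F.degreeIn s v := by
  rw [degreeIn, degreeIn, inter_erase, erase_eq_of_notMem (by simp [h])]

theorem degreeIn_le_card_edgeFinsetIn (hv : v ∈ s) : F.degreeIn s v ≤ #(F.edgeFinsetIn s) :=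
  (card_edgeFinsetIn_erase_add_degreeIn hv).le.trans' (Nat.le_add_left _ _)

theorem degreeIn_pos (h : F.Adj v u) (hu : u ∈ s) : 0 < F.degreeIn s v :=
  card_pos.2 ⟨u, by simp [h, hu]⟩

theorem eq_of_adj_of_degreeIn_le_one (hv : F.degreeIn s v ≤ 1) (hu : F.Adj v u)
    (hw : F.Adj v w) (hus : u ∈ s) (hws : w ∈ s) : u = w :=
  card_le_one.1 hv u (by simp [hu, hus]) w (by simp [hw, hws])

end EdgesIn

section PerfectMatching

variable {G : SimpleGraph V} [DecidableRel G.Adj] {s : Finset V} {u v : V}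

theorem degreeIn_compl_add_two_le_iff (hv : v ∈ s) :
    Gᶜ.degreeIn s v + 2 ≤ #s ↔ ∃ u ∈ s, G.Adj v u := by
  constructor
  · intro h
    by_contra! hno
    have hsub : s.erase v ⊆ Gᶜ.neighborFinset v ∩ s := fun u hu ↦ by
      simp [(ne_of_mem_erase hu).symm, hno u (mem_of_mem_erase hu), mem_of_mem_erase hu]
    have := card_le_card hsub
    rw [card_erase_of_mem hv] at this
    rw [degreeIn] at h
    omega
  · rintro ⟨u, hu, hvu⟩
    have hsub : Gᶜ.neighborFinset v ∩ s ⊆ (s.erase v).erase u := fun x hx ↦ by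
      simp only [mem_inter, mem_neighborFinset, compl_adj] at hx
      exact mem_erase.2 ⟨by rintro rfl; exact hx.1.2 hvu, mem_erase.2 ⟨hx.1.1.symm, hx.2⟩⟩
    rw [degreeIn, ← card_erase_erase_add_two hv hu hvu.ne]
    grw [card_le_card hsub]

theorem card_edgeFinsetIn_compl_erase_erase (hv : v ∈ s) (hu : u ∈ s) (hvu : G.Adj v u) :
    #(Gᶜ.edgeFinsetIn ((s.erase v).erase u)) + Gᶜ.degreeIn s v + Gᶜ.degreeIn s u =
      #(Gᶜ.edgeFinsetIn s) := by
  have hnadj : ¬Gᶜ.Adj u v := fun h ↦ h.2 hvu.symm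
  rw [← card_edgeFinsetIn_erase_add_degreeIn hv,
    ← card_edgeFinsetIn_erase_add_degreeIn (mem_erase.2 ⟨hvu.ne', hu⟩),
    degreeIn_erase_of_not_adj hnadj]
  ring

theorem exists_adj_min_two_le_degreeIn_add (hs : 2 ≤ #s) (h : #(Gᶜ.edgeFinsetIn s) ≤ #s - 2) :
    ∃ v ∈ s, ∃ u ∈ s, G.Adj v u ∧
      min 2 #(Gᶜ.edgeFinsetIn s) ≤ Gᶜ.degreeIn s v + Gᶜ.degreeIn s u := by
  have hnbr (v) (hv : v ∈ s) : ∃ u ∈ s, G.Adj v u := by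
    have := degreeIn_le_card_edgeFinsetIn (F := Gᶜ) hv
    exact (degreeIn_compl_add_two_le_iff hv).1 (by omega)
  by_cases hbig : ∃ v ∈ s, min 2 #(Gᶜ.edgeFinsetIn s) ≤ Gᶜ.degreeIn s v
  · obtain ⟨v, hv, hdeg⟩ := hbig
    obtain ⟨u, hu, hvu⟩ := hnbr v hv
    exact ⟨v, hv, u, hu, hvu, by omega⟩
  push Not at hbig
  have hle1 (x) (hx : x ∈ s) : Gᶜ.degreeIn s x ≤ 1 := by have := hbig x hx; omega
  obtain ⟨v, hv⟩ := card_pos.1 (by omega : 0 < #s)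
  have he : 2 ≤ #(Gᶜ.edgeFinsetIn s) := by
    obtain ⟨e, hmem⟩ := card_pos.1 (by have := hbig v hv; omega : 0 < #(Gᶜ.edgeFinsetIn s))
    induction e with | _ a b =>
    obtain ⟨hab, ha, hb⟩ := mk_mem_edgeFinsetIn.1 hmem
    have := hbig a ha
    have := degreeIn_pos hab hb
    omega
  -- `Gᶜ` has maximum degree one inside `s`, so two distinct edges of it are disjoint
  obtain ⟨e₁, he₁, e₂, he₂, hne⟩ := one_lt_card.1 he
  induction e₁ with | _ a b =>
  induction e₂ with | _ c d =>
  obtain ⟨hab, ha, hb⟩ := mk_mem_edgeFinsetIn.1 he₁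
  obtain ⟨hcd, hc, hd⟩ := mk_mem_edgeFinsetIn.1 he₂
  have huniq {x y z} (hx : x ∈ s) (hy : y ∈ s) (hz : z ∈ s) (hxy : Gᶜ.Adj x y)
      (hxz : Gᶜ.Adj x z) : y = z :=
    eq_of_adj_of_degreeIn_le_one (hle1 x hx) hxy hxz hy hz
  have hac : G.Adj a c := by
    by_contra hnac
    obtain rfl | hac := eq_or_ne a c
    · exact hne (by rw [huniq ha hb hd hab hcd])
    obtain rfl := huniq ha hb hc hab ((compl_adj G a c).2 ⟨hac, hnac⟩)
    obtain rfl := huniq hb ha hd hab.symm hcd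
    exact hne Sym2.eq_swap
  exact ⟨a, ha, c, hc, hac, by have := degreeIn_pos hab hb; have := degreeIn_pos hcd hd; omega⟩

-- For `s = ∅` the bound `#s - 2` is `0` by truncated subtraction.
theorem exists_isMatching_verts_eq_of_card_edgeFinsetIn_compl_le (hs : Even #s)
    (h : #(Gᶜ.edgeFinsetIn s) ≤ #s - 2) : ∃ M : G.Subgraph, M.IsMatching ∧ M.verts = s := by
  induction s using Finset.strongInduction with | H s ih =>
  rcases s.eq_empty_or_nonempty with rfl | hne
  · exact ⟨⊥, fun _ h ↦ h.elim, by simp⟩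
  have h2 : 2 ≤ #s := by
    obtain ⟨r, hr⟩ := hs
    have := hne.card_pos
    omega
  obtain ⟨v, hv, u, hu, hvu, hdeg⟩ := exists_adj_min_two_le_degreeIn_add h2 h
  have hcard := card_erase_erase_add_two hv hu hvu.ne
  have hcount := card_edgeFinsetIn_compl_erase_erase hv hu hvu
  refine exists_isMatching_verts_eq_of_erase_erase hv hu hvu (ih _ ?_ ?_ (by omega))
  · exact (erase_ssubset (mem_erase.2 ⟨hvu.ne', hu⟩)).trans (erase_ssubset hv)
  · rw [← hcard] at hs
    exact (Nat.even_add.1 hs).2 even_two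

theorem exists_two_le_degreeIn_compl (hnbr : ∀ v ∈ s, ∃ u ∈ s, G.Adj v u)
    (he : #(Gᶜ.edgeFinsetIn s) + 1 = #s) : ∃ v ∈ s, 2 ≤ Gᶜ.degreeIn s v := by
  by_contra! hle
  have hsum : ∑ x ∈ s, Gᶜ.degreeIn s x ≤ ∑ _x ∈ s, 1 :=
    sum_le_sum fun x hx ↦ Nat.le_of_lt_succ (hle x hx)
  rw [sum_degreeIn_eq_two_mul_card_edgeFinsetIn, sum_const, smul_eq_mul, mul_one] at hsum
  obtain ⟨x, hx⟩ := card_pos.1 (by omega : 0 < #s)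
  have := (degreeIn_compl_add_two_le_iff hx).2 (hnbr x hx)
  obtain ⟨e, hmem⟩ := card_pos.1 (by omega : 0 < #(Gᶜ.edgeFinsetIn s))
  induction e with | _ a b =>
  obtain ⟨hab, ha, hb⟩ := mk_mem_edgeFinsetIn.1 hmem
  have := degreeIn_pos hab hb
  have := (degreeIn_compl_add_two_le_iff ha).2 (hnbr a ha)
  omega

/- If no edge `vu` of `G` inside `s` meets three edges of `Gᶜ`, take `v` with two
`Gᶜ`-neighbours `a, b` in `s`: every other vertex of `s` is `G`-adjacent to `v`, hence isolated
in `Gᶜ`, and the degree sum `2 (#s - 1)` then forces `Gᶜ.Adj a b` and `#s = 4`. -/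
theorem exists_adj_three_le_degreeIn_add_or_isNClique (hs : Even #s)
    (hnbr : ∀ v ∈ s, ∃ u ∈ s, G.Adj v u) (he : #(Gᶜ.edgeFinsetIn s) + 1 = #s) :
    (∃ v ∈ s, ∃ u ∈ s, G.Adj v u ∧ 3 ≤ Gᶜ.degreeIn s v + Gᶜ.degreeIn s u) ∨
      (#s = 4 ∧ ∃ t ⊆ s, Gᶜ.IsNClique 3 t) := by
  refine or_iff_not_imp_left.2 fun hno ↦ ?_
  push Not at hno
  obtain ⟨r, hr⟩ := hs
  have hsum := sum_degreeIn_eq_two_mul_card_edgeFinsetIn (F := Gᶜ) (s := s)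
  have hle2 (x) (hx : x ∈ s) : Gᶜ.degreeIn s x ≤ 2 := by
    obtain ⟨y, hy, hxy⟩ := hnbr x hx
    have := hno x hx y hy hxy
    omega
  obtain ⟨v, hv, hv2⟩ := exists_two_le_degreeIn_compl hnbr he
  replace hv2 := le_antisymm (hle2 v hv) hv2
  obtain ⟨a, b, hab, hN⟩ := card_eq_two.1 hv2
  have ha : a ∈ Gᶜ.neighborFinset v ∩ s := by rw [hN]; simp
  have hb : b ∈ Gᶜ.neighborFinset v ∩ s := by rw [hN]; simp
  rw [mem_inter, mem_neighborFinset] at ha hb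
  have hsub : {v, a, b} ⊆ s := by simp [insert_subset_iff, hv, ha.2, hb.2]
  have hrest (y) (hy : y ∈ s) (hy' : y ∉ ({v, a, b} : Finset V)) : Gᶜ.degreeIn s y = 0 := by
    simp only [mem_insert, mem_singleton, not_or] at hy'
    have hvy : G.Adj v y := by
      by_contra hvy
      have : y ∈ Gᶜ.neighborFinset v ∩ s := by simp [hy, hvy, Ne.symm hy'.1]
      simp [hN, hy'.2.1, hy'.2.2] at this
    have := hno v hv y hy hvy
    omega
  have hsum3 : ∑ x ∈ s, Gᶜ.degreeIn s x =
      Gᶜ.degreeIn s v + (Gᶜ.degreeIn s a + Gᶜ.degreeIn s b) := by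
    rw [← sum_subset hsub hrest, sum_insert (by simp [ha.1.ne, hb.1.ne]), sum_pair hab]
  have hab' : Gᶜ.Adj a b := by
    by_contra hnab
    have := hno a ha.2 b hb.2 (not_not.1 fun h ↦ hnab ((compl_adj G a b).2 ⟨hab, h⟩))
    have := degreeIn_pos ha.1.symm hv
    have := degreeIn_pos hb.1.symm hv
    omega
  have htri : Gᶜ.IsNClique 3 {v, a, b} := is3Clique_triple_iff.2 ⟨ha.1, hb.1, hab'⟩
  have := card_le_card hsub
  rw [htri.card_eq] at this
  refine ⟨?_, _, hsub, htri⟩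
  have := hle2 a ha.2
  have := hle2 b hb.2
  omega

theorem exists_isMatching_verts_eq_or_of_card_edgeFinsetIn_compl_le (hs : Even #s)
    (h : #(Gᶜ.edgeFinsetIn s) ≤ #s - 1) :
    (∃ M : G.Subgraph, M.IsMatching ∧ M.verts = s) ∨ (∃ w ∈ s, ∀ u ∈ s, ¬G.Adj w u) ∨
      (#s = 4 ∧ ∃ t ⊆ s, Gᶜ.IsNClique 3 t) := by
  by_cases h2 : #(Gᶜ.edgeFinsetIn s) ≤ #s - 2
  · exact .inl (exists_isMatching_verts_eq_of_card_edgeFinsetIn_compl_le hs h2)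
  by_cases hstar : ∃ w ∈ s, ∀ u ∈ s, ¬G.Adj w u
  · exact .inr (.inl hstar)
  push Not at hstar
  obtain ⟨v, hv, u, hu, hvu, h3⟩ | htri :=
    exists_adj_three_le_degreeIn_add_or_isNClique hs hstar (by omega)
  · have hcard := card_erase_erase_add_two hv hu hvu.ne
    have hcount := card_edgeFinsetIn_compl_erase_erase hv hu hvu
    refine .inl (exists_isMatching_verts_eq_of_erase_erase hv hu hvu
      (exists_isMatching_verts_eq_of_card_edgeFinsetIn_compl_le ?_ (by omega)))
    rw [← hcard] at hs
    exact (Nat.even_add.1 hs).2 even_two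
  · exact .inr (.inr htri)

end PerfectMatching

section Complement

variable {G : SimpleGraph V} [DecidableRel G.Adj]

theorem card_edgeFinset_add_card_edgeFinset_compl :
    #G.edgeFinset + #Gᶜ.edgeFinset = (Fintype.card V).choose 2 := by
  rw [← card_union_of_disjoint (disjoint_edgeFinset.2 disjoint_compl_right), ← edgeFinset_sup,
    ← card_edgeFinset_top_eq_card_choose_two]
  congr!
  exact sup_compl_eq_top

theorem card_edgeFinset_compl_add_le {j : ℕ}
    (h : (Fintype.card V - 1).choose 2 + j ≤ #G.edgeFinset) :
    #Gᶜ.edgeFinset + j ≤ Fintype.card V - 1 := by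
  have hchoose (m : ℕ) : m.choose 2 = (m - 1).choose 2 + (m - 1) := by
    cases m <;> simp [Nat.choose_succ_succ', add_comm]
  have := hchoose (Fintype.card V)
  have := card_edgeFinset_add_card_edgeFinset_compl (G := G)
  omega

theorem le_starGraph_of_card_edgeFinset_le_degree {F : SimpleGraph V} [DecidableRel F.Adj] {w : V}
    (h : #F.edgeFinset ≤ F.degree w) : F ≤ starGraph w := by
  have hinc : F.incidenceFinset w = F.edgeFinset :=
    eq_of_subset_of_card_le (F.incidenceFinset_subset w) (by rwa [card_incidenceFinset_eq_degree])
  intro x y hxy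
  have : s(x, y) ∈ F.incidenceFinset w := hinc ▸ F.mem_edgeFinset.2 hxy
  simp only [mem_incidenceFinset, incidenceSet, Set.mem_ofPred_eq, Sym2.mem_iff] at this
  simp only [starGraph_adj]
  grind [hxy.ne]

theorem compl_le_starGraph_of_forall_not_adj {s : Finset V} {w : V} (hw : w ∈ s)
    (hwG : ∀ u ∈ s, ¬G.Adj w u) (hE : #Gᶜ.edgeFinset ≤ #s - 1) :
    Gᶜ ≤ starGraph w ∧ Gᶜ.degree w = #s - 1 := by
  have hdeg : #s - 1 ≤ Gᶜ.degree w := by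
    rw [← card_erase_of_mem hw, ← card_neighborFinset_eq_degree]
    exact card_le_card fun u hu ↦ by simp [(ne_of_mem_erase hu).symm, hwG u (mem_of_mem_erase hu)]
  have := Gᶜ.degree_le_card_edgeFinset w
  exact ⟨le_starGraph_of_card_edgeFinset_le_degree (by omega), by omega⟩

theorem IsNClique.mem_of_adj_of_card_edgeFinset_le {F : SimpleGraph V} [DecidableRel F.Adj]
    {r : ℕ} {t : Finset V} (ht : F.IsNClique r t) (h : #F.edgeFinset ≤ r.choose 2) {x y : V}
    (hxy : F.Adj x y) : x ∈ t ∧ y ∈ t := by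
  have hcard : #{e ∈ F.edgeFinset | e.toFinset ⊆ t} = r.choose 2 := by
    rw [card_filter_edgeFinset_toFinset_subset, ← ht.card_eq]
    convert card_edgeFinset_top_eq_card_choose_two (V := (t : Set V))
    · exact induce_eq_top.2 ht.isClique
    · simp
  have := card_filter_eq_iff.1 (le_antisymm (card_filter_le _ _) (hcard ▸ h)) s(x, y)
    (F.mem_edgeFinset.2 hxy)
  simpa [Finset.subset_iff] using this

end Complement

end SimpleGraph

section Join

variable {α β : Type*} {G : SimpleGraph α} {H : SimpleGraph β}

@[simp] theorem gJoin_adj_inl_inl {a b : α} : (gJoin G H).Adj (.inl a) (.inl b) ↔ G.Adj a b := by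
  simp [gJoin]

@[simp] theorem gJoin_adj_inr_inr {a b : β} : (gJoin G H).Adj (.inr a) (.inr b) ↔ H.Adj a b := by
  simp [gJoin]

@[simp] theorem gJoin_adj_inl_inr {a : α} {b : β} : (gJoin G H).Adj (.inl a) (.inr b) := by
  simp [gJoin]

@[simp] theorem gJoin_adj_inr_inl {a : α} {b : β} : (gJoin G H).Adj (.inr b) (.inl a) := by
  simp [gJoin]

end Join

namespace SimpleGraph

variable {V : Type*} [Fintype V]

theorem nonempty_iso_gJoin_top {W : Type*} [Fintype W] {G : SimpleGraph V} {H : SimpleGraph W}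
    {a : ℕ} (A : Finset V) (hA : #A = a) (hAuniv : ∀ v ∈ A, G.IsUniversal v) (φ : H ↪g G)
    (hφ : ∀ x, φ x ∉ A) (hcard : a + Fintype.card W = Fintype.card V) :
    Nonempty (G ≃g gJoin (⊤ : SimpleGraph (Fin a)) H) := by
  obtain ⟨ψ, hψA⟩ := exists_embedding_fin_forall_mem hA
  have hψ (i : Fin a) : G.IsUniversal (ψ i) := hAuniv _ (hψA i)
  have hψφ (i : Fin a) (x : W) : ψ i ≠ φ x := fun h ↦ hφ x (h ▸ hψA i)
  have hbij : Function.Bijective (Sum.elim ψ φ) :=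
    (Fintype.bijective_iff_injective_and_card _).2
      ⟨ψ.injective.sumElim φ.injective hψφ, by simp [hcard]⟩
  refine ⟨RelIso.symm ⟨Equiv.ofBijective _ hbij, ?_⟩⟩
  rintro (i | x) (j | y)
  · simpa using ⟨fun h ↦ ψ.injective.ne_iff.1 h.ne, fun h ↦ hψ i (ψ.injective.ne h)⟩
  · simpa using hψ i (hψφ i y)
  · simpa using (hψ j (hψφ j x)).symm
  · simp

variable [DecidableEq V] {G : SimpleGraph V} [DecidableRel G.Adj]

theorem nonempty_iso_gJoin_of_compl_le_starGraph {w : V} {a m : ℕ} (hw : Gᶜ ≤ starGraph w)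
    (hm : Gᶜ.degree w = m) (hcard : a + m + 1 = Fintype.card V) :
    Nonempty (G ≃g gJoin (⊤ : SimpleGraph (Fin a))
      ((⊤ : SimpleGraph (Fin m)) ⊕g (⊤ : SimpleGraph (Fin 1)))) := by
  obtain ⟨ψ, hψ⟩ := exists_embedding_fin_forall_mem (card_neighborFinset_eq_degree Gᶜ w ▸ hm)
  set L := Gᶜ.neighborFinset w
  have hwL : w ∉ L := by simp [L]
  have hψw (i : Fin m) : ¬G.Adj (ψ i) w := fun h ↦ ((mem_neighborFinset _ _ _).1 (hψ i)).2 h.symm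
  have hψψ (i j : Fin m) (hij : i ≠ j) : G.Adj (ψ i) (ψ j) := by
    by_contra h
    have := hw ((compl_adj G _ _).2 ⟨ψ.injective.ne hij, h⟩)
    grind [starGraph_adj]
  let φ : (⊤ : SimpleGraph (Fin m)) ⊕g (⊤ : SimpleGraph (Fin 1)) ↪g G :=
    { toFun := Sum.elim ψ fun _ ↦ w
      inj' := ψ.injective.sumElim (fun _ _ _ ↦ Subsingleton.elim _ _) fun i _ h ↦ hwL (h ▸ hψ i)
      map_rel_iff' := by
        rintro (i | i) (j | j)
        · simpa using ⟨fun h ↦ ψ.injective.ne_iff.1 h.ne, hψψ i j⟩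
        · simpa using hψw i
        · simpa using fun h ↦ hψw j h.symm
        · simp [Subsingleton.elim i j] }
  refine nonempty_iso_gJoin_top (insert w L)ᶜ ?_ ?_ φ ?_ ?_
  · rw [card_compl, card_insert_of_notMem hwL, card_neighborFinset_eq_degree, hm]
    omega
  · intro v hv u hvu
    simp only [mem_compl, mem_insert, not_or, L, mem_neighborFinset, compl_adj, not_and,
      not_not] at hv
    by_contra h
    obtain ⟨-, rfl | rfl⟩ := starGraph_adj.1 (hw ((compl_adj G v u).2 ⟨hvu, h⟩))
    · exact hv.1 rfl
    · exact h (hv.2 hvu.symm).symm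
  · rintro (i | i) <;> simp [φ, hψ]
  · simp only [Fintype.card_sum, Fintype.card_fin, Fintype.card_unique]
    omega

theorem nonempty_iso_gJoin_of_isNClique_compl {t : Finset V} {a r : ℕ} (ht : Gᶜ.IsNClique r t)
    (hE : #Gᶜ.edgeFinset ≤ r.choose 2) (hcard : a + r = Fintype.card V) :
    Nonempty (G ≃g gJoin (⊤ : SimpleGraph (Fin a)) (⊥ : SimpleGraph (Fin r))) := by
  obtain ⟨ψ, hψ⟩ := exists_embedding_fin_forall_mem ht.card_eq
  let φ : (⊥ : SimpleGraph (Fin r)) ↪g G :=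
    { toEmbedding := ψ
      map_rel_iff' := fun {i j} ↦ by
        simpa using fun h ↦ (ht.isClique (hψ i) (hψ j) h.ne).2 h }
  refine nonempty_iso_gJoin_top tᶜ (by rw [card_compl, ht.card_eq]; omega) ?_ φ
    (by simp [φ, hψ]) (by simp [hcard])
  intro v hv u hvu
  by_contra h
  exact mem_compl.1 hv (ht.mem_of_adj_of_card_edgeFinset_le hE ((compl_adj G v u).2 ⟨hvu, h⟩)).1

end SimpleGraph

open SimpleGraph

theorem size_k_extendable_general (k n : ℕ) (hnev : Even n)
    (G : SimpleGraph (Fin n))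
    (hsize : (n - 1).choose 2 + 2 * k ≤ G.edgeSet.ncard) :
    kExtendable G k ∨
    Nonempty (G ≃g gJoin (⊤ : SimpleGraph (Fin (2 * k)))
      ((⊤ : SimpleGraph (Fin (n - 2 * k - 1))) ⊕g (⊤ : SimpleGraph (Fin 1)))) ∨
    Nonempty (G ≃g gJoin (⊤ : SimpleGraph (Fin (2 * k + 1))) (⊥ : SimpleGraph (Fin 3))) := by
  classical
  rw [← coe_edgeFinset, Set.ncard_coe_finset] at hsize
  have hE := card_edgeFinset_compl_add_le (G := G) (by simpa using hsize)
  rw [Fintype.card_fin] at hE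
  refine or_iff_not_imp_right.2 fun hexc M hM hMk ↦ ?_
  set s : Finset (Fin n) := M.verts.toFinsetᶜ
  have hs : #s = n - 2 * k := by
    rw [card_compl, Fintype.card_fin, ← Set.ncard_eq_toFinset_card', hM.ncard_verts, hMk]
  have hsev : Even #s := by
    obtain ⟨r, hr⟩ := hnev
    exact ⟨r - k, by omega⟩
  obtain ⟨M', hM', hM'v⟩ | ⟨w, hw, hwG⟩ | ⟨hs4, t, -, ht⟩ :=
    exists_isMatching_verts_eq_or_of_card_edgeFinsetIn_compl_le (G := G) hsev
      ((card_le_card inter_subset_left).trans (by omega))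
  · exact ⟨M ⊔ M', hM.isPerfectMatching_sup hM' (by simp [hM'v, s]),
      Subgraph.edgeSet_mono le_sup_left⟩
  · obtain ⟨hstar, hdeg⟩ := compl_le_starGraph_of_forall_not_adj hw hwG (by omega)
    have := card_pos.2 ⟨w, hw⟩
    exact absurd (.inl (nonempty_iso_gJoin_of_compl_le_starGraph hstar (by omega)
      (by rw [Fintype.card_fin]; omega))) hexc
  · exact absurd (.inr (nonempty_iso_gJoin_of_isNClique_compl ht
      (by rw [show (3 : ℕ).choose 2 = 3 from rfl]; omega) (by rw [Fintype.card_fin]; omega))) hexc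

theorem size_k_extendable (k n : ℕ) (hk : 0 < k) (hn : 0 < n) (hnev : Even n)
    (G : SimpleGraph (Fin n)) (hconn : G.Connected)
    (hsize : (n - 1).choose 2 + 2 * k ≤ G.edgeSet.ncard) :
    kExtendable G k ∨
    Nonempty (G ≃g gJoin (⊤ : SimpleGraph (Fin (2 * k)))
      ((⊤ : SimpleGraph (Fin (n - 2 * k - 1))) ⊕g (⊤ : SimpleGraph (Fin 1)))) ∨
    Nonempty (G ≃g gJoin (⊤ : SimpleGraph (Fin (2 * k + 1))) (⊥ : SimpleGraph (Fin 3))) :=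
  size_k_extendable_general k n hnev G hsize
end

section
/- Let n be an even positive integer with n ≥ 10 or n = 4. If G is a connected graph on n vertices and there exists a subset S of V(G) with o(G − S) ≥ |S| + 2, then G has at most C(n-2,2) + 2 edges. -/
/-!
Let `s = |S|` and let the `k ≥ s + 2` components of `G - S` have sizes `f₁, …, f_k`, summing to
`m = n - s`. A vertex outside `S` has all its neighbours in `S` or in its own component, so the
handshake lemma gives `2|E| + n ≤ s n + m s + ∑ fᵢ²`, and `∑ fᵢ²` is largest when all but one
component are singletons. Connectivity forces `s ≥ 1`. With `k = s + 2` the resulting bound is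
convex in `s`: at `s = 1` it is exactly `2 C(n-2, 2) + 4`, and at the other extreme `2s + 2 = n`
it is at most that value precisely when `n = 4` or `n ≥ 10`.
-/

open SimpleGraph Finset

/-- The number of odd components (connected components of odd order) of a graph. -/
noncomputable def oddComp {α : Type*} (H : SimpleGraph α) : ℕ :=
  Nat.card {c : H.ConnectedComponent // Odd (Nat.card c.supp)}

theorem oddComp_le_card_connectedComponent {α : Type*} [Finite α] (H : SimpleGraph α) :
    oddComp H ≤ Nat.card H.ConnectedComponent :=
  Finite.card_subtype_le _

theorem Finset.sum_sq_add_card_le {ι : Type*} (t : Finset ι) {f : ι → ℕ}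
    (hf : ∀ i ∈ t, 1 ≤ f i) :
    ∑ i ∈ t, f i ^ 2 + #t ≤ (∑ i ∈ t, f i - #t) ^ 2 + 2 * ∑ i ∈ t, f i := by
  have hf' : ∀ i ∈ t, f i = (f i - 1) + 1 := fun i hi => (Nat.sub_add_cancel (hf i hi)).symm
  have hsum : ∑ i ∈ t, f i = ∑ i ∈ t, (f i - 1) + #t := by
    rw [sum_congr rfl hf', sum_add_distrib, card_eq_sum_ones]
  have hsq : ∑ i ∈ t, f i ^ 2 = ∑ i ∈ t, (f i - 1) ^ 2 + 2 * ∑ i ∈ t, (f i - 1) + #t := by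
    rw [sum_congr rfl fun i hi => by rw [hf' i hi], mul_sum, card_eq_sum_ones, ← sum_add_distrib,
      ← sum_add_distrib]
    exact sum_congr rfl fun i _ => by ring
  have := sum_sq_le_sq_sum_of_nonneg (s := t) (f := fun i => f i - 1) fun i _ => Nat.zero_le _
  rw [hsq, hsum, Nat.add_sub_cancel]
  omega

namespace SimpleGraph

theorem Connected.nonempty_of_one_lt_card_connectedComponent_induce_compl {V : Type*}
    [Finite V] {G : SimpleGraph V} (hG : G.Connected) (S : Set V)
    (h : 1 < Nat.card (G.induce Sᶜ).ConnectedComponent) : S.Nonempty := by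
  rw [Set.nonempty_iff_ne_empty]
  rintro rfl
  have : Subsingleton G.ConnectedComponent := hG.preconnected.subsingleton_connectedComponent
  rw [Set.compl_empty, Nat.card_congr (induceUnivIso G).connectedComponentEquiv] at h
  exact h.not_ge (Finite.card_le_one_iff_subsingleton.mpr this)

section Components

variable {W : Type*} [Fintype W] (H : SimpleGraph W) [Fintype H.ConnectedComponent]

theorem sum_comp_connectedComponentMk {M : Type*} [AddCommMonoid M]
    (f : H.ConnectedComponent → M) :
    ∑ w, f (H.connectedComponentMk w) = ∑ c, Nat.card c.supp • f c := by
  classical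
  rw [← sum_fiberwise univ H.connectedComponentMk]
  refine sum_congr rfl fun c _ => ?_
  rw [sum_congr rfl fun w hw => by rw [(mem_filter.mp hw).2], sum_const, Nat.card_eq_card_toFinset]
  congr 2
  ext w
  simp [ConnectedComponent.mem_supp_iff]

theorem sum_card_supp_sq_add_card_le :
    ∑ c : H.ConnectedComponent, Nat.card c.supp ^ 2 + Fintype.card H.ConnectedComponent ≤
      (Fintype.card W - Fintype.card H.ConnectedComponent) ^ 2 + 2 * Fintype.card W := by
  have hsum : ∑ c : H.ConnectedComponent, Nat.card c.supp = Fintype.card W := by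
    have := H.sum_comp_connectedComponentMk fun _ => 1
    simp only [smul_eq_mul, mul_one, sum_const, card_univ] at this
    exact this.symm
  have := univ.sum_sq_add_card_le fun (c : H.ConnectedComponent) _ =>
    Nat.card_pos_iff.mpr ⟨c.nonempty_supp.to_subtype, inferInstance⟩
  rwa [hsum, card_univ] at this

end Components

variable {V : Type*} [Fintype V] (G : SimpleGraph V) [DecidableRel G.Adj] (S : Set V)

theorem degree_add_one_le_ncard_add_card_supp (v : ↥Sᶜ) :
    G.degree v + 1 ≤ S.ncard + Nat.card ((G.induce Sᶜ).connectedComponentMk v).supp := by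
  have hsub : insert (v : V) (G.neighborSet v) ⊆
      S ∪ Subtype.val '' ((G.induce Sᶜ).connectedComponentMk v).supp := by
    rintro w hw
    by_cases hwS : w ∈ S
    · exact Or.inl hwS
    refine Or.inr ⟨⟨w, hwS⟩, ?_, rfl⟩
    rw [ConnectedComponent.mem_supp_iff, ConnectedComponent.eq]
    rcases hw with rfl | hadj
    · rfl
    · exact (Adj.reachable (G := G.induce Sᶜ) (by simpa using hadj)).symm
  calc G.degree v + 1 = (insert (v : V) (G.neighborSet v)).ncard := by
        rw [Set.ncard_insert_of_notMem (by simp), Set.ncard_eq_toFinset_card', Set.toFinset_card,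
          card_neighborSet_eq_degree]
    _ ≤ (S ∪ Subtype.val '' ((G.induce Sᶜ).connectedComponentMk v).supp).ncard :=
        Set.ncard_le_ncard hsub
    _ ≤ S.ncard + (Subtype.val '' ((G.induce Sᶜ).connectedComponentMk v).supp).ncard :=
        Set.ncard_union_le _ _
    _ = _ := by rw [Set.ncard_image_of_injective _ Subtype.val_injective, Nat.card_coe_set_eq]

theorem two_mul_card_edgeFinset_add_card_le [Fintype (G.induce Sᶜ).ConnectedComponent] :
    2 * #G.edgeFinset + Fintype.card V ≤ S.ncard * Fintype.card V + Sᶜ.ncard * S.ncard +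
      ∑ c : (G.induce Sᶜ).ConnectedComponent, Nat.card c.supp ^ 2 := by
  classical
  have hS : ∑ v : S, (G.degree v + 1) ≤ S.ncard * Fintype.card V := by
    calc ∑ v : S, (G.degree v + 1) ≤ ∑ _v : S, Fintype.card V :=
          sum_le_sum fun v _ => G.degree_lt_card_verts v
      _ = S.ncard * Fintype.card V := by
          rw [sum_const, card_univ, smul_eq_mul, ← Nat.card_eq_fintype_card, Nat.card_coe_set_eq]
  have hSc : ∑ v : ↥Sᶜ, (G.degree v + 1) ≤
      Sᶜ.ncard * S.ncard + ∑ c : (G.induce Sᶜ).ConnectedComponent, Nat.card c.supp ^ 2 := by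
    calc ∑ v : ↥Sᶜ, (G.degree v + 1)
        ≤ ∑ v : ↥Sᶜ, (S.ncard + Nat.card ((G.induce Sᶜ).connectedComponentMk v).supp) :=
          sum_le_sum fun v _ => G.degree_add_one_le_ncard_add_card_supp S v
      _ = _ := by
          rw [sum_add_distrib, sum_comp_connectedComponentMk (f := fun c => Nat.card c.supp),
            sum_const, card_univ, smul_eq_mul, ← Nat.card_eq_fintype_card, Nat.card_coe_set_eq]
          simp only [smul_eq_mul, sq]
  calc 2 * #G.edgeFinset + Fintype.card V = ∑ v, (G.degree v + 1) := by
        rw [sum_add_distrib, sum_degrees_eq_twice_card_edges, sum_const, card_univ, smul_eq_mul,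
          mul_one]
    _ = ∑ v : S, (G.degree v + 1) + ∑ v : ↥Sᶜ, (G.degree v + 1) :=
        (Fintype.sum_subtype_add_sum_subtype (· ∈ S) _).symm
    _ ≤ _ := by omega

end SimpleGraph

theorem Nat.two_mul_choose_sub_two_two_add (n : ℕ) (hn : 3 ≤ n) :
    2 * (n - 2).choose 2 + 5 * n = n ^ 2 + 6 := by
  obtain ⟨p, rfl⟩ : ∃ p, n = p + 3 := ⟨n - 3, by omega⟩
  have := Nat.div_mul_cancel (Nat.even_mul_succ_self p).two_dvd
  rw [show p + 3 - 2 = p + 1 by omega, Nat.choose_two_right, Nat.add_sub_cancel,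
    Nat.mul_comm (p + 1) p]
  nlinarith

/-- Here `E` counts edges, `Q` is the sum of the squared component sizes, and `n = s + k + d`
splits the vertices into `S`, one per component, and the `d` remaining ones. -/
theorem le_choose_sub_two_two_add_two_of_component_bounds {E Q n s k d : ℕ} (hs : 1 ≤ s)
    (hk : s + 2 ≤ k) (hnd : n = s + k + d) (hn : 10 ≤ n ∨ n = 4)
    (hE : 2 * E + n ≤ s * n + (k + d) * s + Q) (hQ : Q + k ≤ d ^ 2 + 2 * (k + d)) :
    E ≤ (n - 2).choose 2 + 2 := by
  have hchoose := Nat.two_mul_choose_sub_two_two_add n (by omega)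
  subst hnd
  rcases hn with hn | hn
  · nlinarith [Nat.mul_le_mul_right d hk]
  · obtain ⟨rfl, rfl, rfl⟩ : s = 1 ∧ k = 3 ∧ d = 0 := by omega
    omega

theorem size_bound_of_many_odd_components_general (n : ℕ)
    (hn : 10 ≤ n ∨ n = 4) (G : SimpleGraph (Fin n)) (hconn : G.Connected)
    (S : Set (Fin n)) (hS : S.ncard + 2 ≤ oddComp (G.induce Sᶜ)) :
    G.edgeSet.ncard ≤ (n - 2).choose 2 + 2 := by
  classical
  let _ : Fintype (G.induce Sᶜ).ConnectedComponent := Fintype.ofFinite _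
  have hk : S.ncard + 2 ≤ Fintype.card (G.induce Sᶜ).ConnectedComponent :=
    hS.trans ((oddComp_le_card_connectedComponent _).trans_eq Nat.card_eq_fintype_card)
  have hs : 1 ≤ S.ncard := (Set.ncard_pos S.toFinite).mpr <|
    hconn.nonempty_of_one_lt_card_connectedComponent_induce_compl S <| by
      rw [Nat.card_eq_fintype_card]; omega
  have hcard : Fintype.card (Sᶜ : Set (Fin n)) = Sᶜ.ncard := by
    rw [← Nat.card_eq_fintype_card, Nat.card_coe_set_eq]
  obtain ⟨d, hd⟩ : ∃ d, Sᶜ.ncard = Fintype.card (G.induce Sᶜ).ConnectedComponent + d :=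
    Nat.exists_eq_add_of_le <| hcard ▸ Fintype.card_le_of_surjective _ fun c => c.exists_rep
  have hsn : S.ncard + Sᶜ.ncard = n := by
    rw [Set.ncard_add_ncard_compl, Nat.card_eq_fintype_card, Fintype.card_fin]
  have hE := G.two_mul_card_edgeFinset_add_card_le S
  have hQ := (G.induce Sᶜ).sum_card_supp_sq_add_card_le
  rw [Fintype.card_fin, hd] at hE
  rw [hcard, hd, Nat.add_sub_cancel_left] at hQ
  rw [← coe_edgeFinset, Set.ncard_coe_finset]
  exact le_choose_sub_two_two_add_two_of_component_bounds hs hk (by omega) hn hE hQ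

theorem size_bound_of_many_odd_components (n : ℕ) (hnev : Even n)
    (hn : 10 ≤ n ∨ n = 4) (G : SimpleGraph (Fin n)) (hconn : G.Connected)
    (S : Set (Fin n)) (hS : S.ncard + 2 ≤ oddComp (G.induce Sᶜ)) :
    G.edgeSet.ncard ≤ (n - 2).choose 2 + 2 :=
  size_bound_of_many_odd_components_general n hn G hconn S hS
end

section
/- Let G be a connected graph on 6 vertices and suppose there exists S ⊆ V(G) with o(G − S) ≥ |S| + 2. Then the adjacency spectral radius of G is at most (1+√33)/2, and the graph K_2 ∨ 4K_1 achieves spectral radius exactly (1+√33)/2. -/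
open SimpleGraph

open scoped Classical in
/-- The adjacency spectral radius of a finite simple graph: the largest real
eigenvalue of its adjacency matrix. -/
noncomputable def specRad {V : Type*} [Fintype V] (G : SimpleGraph V) : ℝ :=
  sSup {μ : ℝ | ∃ v : V → ℝ, v ≠ 0 ∧
    Matrix.mulVec (Matrix.of fun i j => if G.Adj i j then (1:ℝ) else 0) v = μ • v}

noncomputable def sb : ℝ := (1 + Real.sqrt 33) / 2
lemma sb_sq : sb ^ 2 = sb + 8 := by
  have h : Real.sqrt 33 ^ 2 = 33 := Real.sq_sqrt (by norm_num)
  unfold sb; nlinarith [h]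
lemma sb_ge : 3 ≤ sb := by
  have h : Real.sqrt 33 ^ 2 = 33 := Real.sq_sqrt (by norm_num)
  have h0 : 0 ≤ Real.sqrt 33 := Real.sqrt_nonneg 33
  unfold sb; nlinarith
lemma sb_le : sb ≤ 4 := by
  have h : Real.sqrt 33 ^ 2 = 33 := Real.sq_sqrt (by norm_num)
  have h0 : 0 ≤ Real.sqrt 33 := Real.sqrt_nonneg 33
  unfold sb; nlinarith

section Quad
variable {V : Type*} [Fintype V] [DecidableEq V]

lemma sum_offdiag (u : V → ℝ) :
    ∑ i, ∑ j, (if i = j then 0 else u i * u j) = (∑ i, u i)^2 - ∑ i, u i^2 := by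
  have h : ∀ i : V, ∑ j, (if i = j then (0:ℝ) else u i * u j)
      = u i * (∑ j, u j) - u i * u i := by
    intro i
    have : ∀ j : V, (if i = j then (0:ℝ) else u i * u j)
        = u i * u j - (if i = j then u i * u j else 0) := by
      intro j; split_ifs <;> ring
    rw [Finset.sum_congr rfl (fun j _ => this j), Finset.sum_sub_distrib, ← Finset.mul_sum,
      Finset.sum_ite_eq, if_pos (Finset.mem_univ i)]
  rw [Finset.sum_congr rfl (fun i _ => h i), Finset.sum_sub_distrib, ← Finset.sum_mul]
  have h2 : ∑ i : V, u i * u i = ∑ i : V, u i ^ 2 := Finset.sum_congr rfl (fun i _ => (sq (u i)).symm)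
  rw [h2, sq]


lemma sum_indic (D : Finset V) (w : V → ℝ) :
    ∑ i, (if i ∈ D then w i else 0) = ∑ i ∈ D, w i := by
  rw [Finset.sum_ite_mem, Finset.univ_inter]

lemma quadB {G : SimpleGraph V} [DecidableRel G.Adj] (hV : Fintype.card V = 6) (p q : V)
    (hpq : p ≠ q) (hcov : ∀ i j, G.Adj i j → i = p ∨ i = q ∨ j = p ∨ j = q)
    (w : V → ℝ) (hw : ∀ i, 0 ≤ w i) :
    ∑ i, ∑ j, (if G.Adj i j then (1:ℝ) else 0) * (w i * w j) ≤ sb * ∑ i, w i ^ 2 := by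
  set D : Finset V := (Finset.univ.erase p).erase q with hD
  have hpD : p ∉ D := fun h => (Finset.mem_erase.mp (Finset.mem_of_mem_erase h)).1 rfl
  have hqD : q ∉ D := fun h => (Finset.mem_erase.mp h).1 rfl
  set u : V → ℝ := fun i => if i ∈ D then w i else 0 with hu
  have hstep1 : ∑ i, ∑ j, (if G.Adj i j then (1:ℝ) else 0) * (w i * w j)
      ≤ ∑ i, ∑ j, ((if i = j then 0 else w i * w j) - (if i = j then 0 else u i * u j)) := by
    refine Finset.sum_le_sum (fun i _ => Finset.sum_le_sum (fun j _ => ?_))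
    by_cases hA : G.Adj i j
    · have hne : i ≠ j := hA.ne
      have huu : u i * u j = 0 := by
        rcases hcov i j hA with h|h|h|h <;> subst h <;>
          simp [hu, hpD, hqD, mul_comm]
      rw [if_pos hA, if_neg hne, if_neg hne, huu]; ring_nf; exact le_refl _
    · rw [if_neg hA, zero_mul]
      split_ifs with h
      · simp
      · have h1 : u i ≤ w i := by by_cases hi : i ∈ D <;> simp [hu, hi, hw i]
        have h2 : u j ≤ w j := by by_cases hj : j ∈ D <;> simp [hu, hj, hw j]
        have h3 : 0 ≤ u i := by by_cases hi : i ∈ D <;> simp [hu, hi, hw i]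
        have h4 : 0 ≤ u j := by by_cases hj : j ∈ D <;> simp [hu, hj, hw j]
        nlinarith [hw i, hw j]
  have hstep2 : ∑ i, ∑ j, ((if i = j then (0:ℝ) else w i * w j) - (if i = j then 0 else u i * u j))
      = ((∑ i, w i)^2 - ∑ i, w i^2) - ((∑ i, u i)^2 - ∑ i, u i^2) := by
    simp only [Finset.sum_sub_distrib, sum_offdiag]
  have hsu : ∑ i, u i = ∑ i ∈ D, w i := sum_indic D w
  have hsu2 : ∑ i, u i ^ 2 = ∑ i ∈ D, w i ^ 2 := by
    have : ∀ i : V, u i ^ 2 = (if i ∈ D then w i ^ 2 else 0) := by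
      intro i; by_cases hi : i ∈ D <;> simp [hu, hi]
    rw [Finset.sum_congr rfl (fun i _ => this i)]
    rw [Finset.sum_ite_mem, Finset.univ_inter]
  have hqmem : q ∈ Finset.univ.erase p := Finset.mem_erase.mpr ⟨Ne.symm hpq, Finset.mem_univ q⟩
  have hsplit : ∀ f : V → ℝ, ∑ i, f i = f p + (f q + ∑ i ∈ D, f i) := by
    intro f
    rw [← Finset.add_sum_erase _ f (Finset.mem_univ p), ← Finset.add_sum_erase _ f hqmem]
  have hcard : (D.card : ℝ) = 4 := by
    rw [hD, Finset.card_erase_of_mem hqmem, Finset.card_erase_of_mem (Finset.mem_univ p), Finset.card_univ, hV]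
    norm_num
  have hcheb : (∑ i ∈ D, w i)^2 ≤ 4 * ∑ i ∈ D, w i ^ 2 := by
    calc (∑ i ∈ D, w i)^2 ≤ (D.card : ℝ) * ∑ i ∈ D, w i ^ 2 := sq_sum_le_card_mul_sum_sq
      _ = 4 * ∑ i ∈ D, w i ^ 2 := by rw [hcard]
  have hT : 0 ≤ ∑ i ∈ D, w i := Finset.sum_nonneg (fun i _ => hw i)
  have hQ : 0 ≤ ∑ i ∈ D, w i ^ 2 := Finset.sum_nonneg (fun i _ => sq_nonneg _)
  refine le_trans hstep1 ?_
  rw [hstep2, hsu, hsu2, hsplit w, hsplit (fun i => w i ^ 2)]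
  set x := w p; set y := w q; set T := ∑ i ∈ D, w i; set Q := ∑ i ∈ D, w i ^ 2
  have h1 := sb_sq; have h2 := sb_ge; have h3 := sb_le
  nlinarith [sq_nonneg ((sb-1)*(x+y) - 2*T), sq_nonneg (x - y), hw p, hw q,
    mul_nonneg (hw p) (hw q), mul_nonneg (mul_nonneg (hw p) (hw q)) hT]


lemma quadA {G : SimpleGraph V} [DecidableRel G.Adj] (hV : Fintype.card V = 6) (p : V)
    (C : Finset V) (hpC : p ∉ C) (hC : C.card = 3)
    (hcov : ∀ i j, G.Adj i j → i = p ∨ j = p ∨ (i ∈ C ∧ j ∈ C))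
    (w : V → ℝ) (hw : ∀ i, 0 ≤ w i) :
    ∑ i, ∑ j, (if G.Adj i j then (1:ℝ) else 0) * (w i * w j) ≤ sb * ∑ i, w i ^ 2 := by
  set u : V → ℝ := fun i => if i ∈ C then w i else 0 with hu
  set f : V → ℝ := fun i => if i = p then w i else 0 with hf
  set g : V → ℝ := fun i => if i = p then 0 else w i with hg
  have hf0 : ∀ i, 0 ≤ f i := fun i => by
    show (0:ℝ) ≤ if i = p then w i else 0
    split_ifs; exacts [hw i, le_rfl]
  have hg0 : ∀ i, 0 ≤ g i := fun i => by
    show (0:ℝ) ≤ if i = p then 0 else w i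
    split_ifs; exacts [le_rfl, hw i]
  have hu0 : ∀ i, 0 ≤ u i := fun i => by
    show (0:ℝ) ≤ if i ∈ C then w i else 0
    split_ifs; exacts [hw i, le_rfl]
  have hstep1 : ∑ i, ∑ j, (if G.Adj i j then (1:ℝ) else 0) * (w i * w j)
      ≤ ∑ i, ∑ j, (f i * g j + g i * f j + (if i = j then 0 else u i * u j)) := by
    refine Finset.sum_le_sum (fun i _ => Finset.sum_le_sum (fun j _ => ?_))
    by_cases hA : G.Adj i j
    · have hne : i ≠ j := hA.ne
      rw [if_pos hA, one_mul]
      rcases hcov i j hA with h|h|h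
      · have h1 : f i * g j = w i * w j := by
          subst h; simp [hf, hg, Ne.symm hne]
        have h2 : (0:ℝ) ≤ (if i = j then 0 else u i * u j) := by
          rw [if_neg hne]; exact mul_nonneg (hu0 i) (hu0 j)
        nlinarith [mul_nonneg (hg0 i) (hf0 j)]
      · have h1 : g i * f j = w i * w j := by
          subst h; simp [hf, hg, hne]
        have h2 : (0:ℝ) ≤ (if i = j then 0 else u i * u j) := by
          rw [if_neg hne]; exact mul_nonneg (hu0 i) (hu0 j)
        nlinarith [mul_nonneg (hf0 i) (hg0 j)]
      · have h1 : (if i = j then (0:ℝ) else u i * u j) = w i * w j := by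
          rw [if_neg hne]; simp [hu, h.1, h.2]
        nlinarith [mul_nonneg (hf0 i) (hg0 j), mul_nonneg (hg0 i) (hf0 j)]
    · rw [if_neg hA, zero_mul]
      have h2 : (0:ℝ) ≤ (if i = j then 0 else u i * u j) := by
        split_ifs; exact le_refl 0; exact mul_nonneg (hu0 i) (hu0 j)
      nlinarith [mul_nonneg (hf0 i) (hg0 j), mul_nonneg (hg0 i) (hf0 j)]
  refine le_trans hstep1 ?_
  have hsum : ∑ i, ∑ j, (f i * g j + g i * f j + (if i = j then (0:ℝ) else u i * u j))
      = (∑ i, f i) * (∑ j, g j) + (∑ i, g i) * (∑ j, f j) + ((∑ i, u i)^2 - ∑ i, u i^2) := by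
    simp only [Finset.sum_add_distrib, sum_offdiag]
    rw [← Finset.sum_mul_sum, ← Finset.sum_mul_sum]
  rw [hsum]
  have hsf : ∑ i, f i = w p := by
    rw [hf]; simp [Finset.sum_ite_eq']
  have hCsub : C ⊆ Finset.univ.erase p := fun i hi =>
    Finset.mem_erase.mpr ⟨fun h => hpC (h ▸ hi), Finset.mem_univ i⟩
  set E : Finset V := (Finset.univ.erase p) \ C with hE
  have hsplitE : ∀ h : V → ℝ, ∑ i ∈ Finset.univ.erase p, h i = ∑ i ∈ E, h i + ∑ i ∈ C, h i :=
    fun h => (Finset.sum_sdiff hCsub).symm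
  have hsplit : ∀ h : V → ℝ, ∑ i, h i = h p + (∑ i ∈ E, h i + ∑ i ∈ C, h i) := by
    intro h
    rw [← Finset.add_sum_erase _ h (Finset.mem_univ p), hsplitE]
  have hsg : ∑ i, g i = ∑ i ∈ E, w i + ∑ i ∈ C, w i := by
    have : ∀ i, g i = w i - f i := by
      intro i; by_cases h : i = p <;> simp [hf, hg, h]
    rw [Finset.sum_congr rfl (fun i _ => this i), Finset.sum_sub_distrib, hsf, hsplit w]
    ring
  have hsu : ∑ i, u i = ∑ i ∈ C, w i := sum_indic C w
  have hsu2 : ∑ i, u i ^ 2 = ∑ i ∈ C, w i ^ 2 := by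
    have : ∀ i : V, u i ^ 2 = (if i ∈ C then w i ^ 2 else 0) := by
      intro i; by_cases hi : i ∈ C <;> simp [hu, hi]
    rw [Finset.sum_congr rfl (fun i _ => this i), Finset.sum_ite_mem, Finset.univ_inter]
  have hcardE : (E.card : ℝ) = 2 := by
    rw [hE, Finset.card_sdiff_of_subset hCsub, Finset.card_erase_of_mem (Finset.mem_univ p),
      Finset.card_univ, hV, hC]
    norm_num
  have hchebC : (∑ i ∈ C, w i)^2 ≤ 3 * ∑ i ∈ C, w i ^ 2 := by
    calc (∑ i ∈ C, w i)^2 ≤ (C.card : ℝ) * ∑ i ∈ C, w i ^ 2 := sq_sum_le_card_mul_sum_sq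
      _ = 3 * ∑ i ∈ C, w i ^ 2 := by rw [hC]; norm_num
  have hchebE : (∑ i ∈ E, w i)^2 ≤ 2 * ∑ i ∈ E, w i ^ 2 := by
    calc (∑ i ∈ E, w i)^2 ≤ (E.card : ℝ) * ∑ i ∈ E, w i ^ 2 := sq_sum_le_card_mul_sum_sq
      _ = 2 * ∑ i ∈ E, w i ^ 2 := by rw [hcardE]
  rw [hsf, hsg, hsu, hsu2, hsplit (fun i => w i ^ 2)]
  have hT : 0 ≤ ∑ i ∈ C, w i := Finset.sum_nonneg (fun i _ => hw i)
  have hDs : 0 ≤ ∑ i ∈ E, w i := Finset.sum_nonneg (fun i _ => hw i)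
  set x := w p; set T := ∑ i ∈ C, w i; set Ds := ∑ i ∈ E, w i
  set QC := ∑ i ∈ C, w i ^ 2; set QE := ∑ i ∈ E, w i ^ 2
  have h1 := sb_sq; have h2 := sb_ge; have h3 := sb_le
  have hx : 0 ≤ x := hw p
  have expand : 3*(5-sb)*sb*(sb*x^2 + sb/2*Ds^2 + (sb-2)/3*T^2 - 2*x*T - 2*x*Ds)
      = 3*(5-sb)*(sb*x-T-Ds)^2 + ((5-sb)*T-3*Ds)^2 + (24-3*sb)*Ds^2 := by
    linear_combination (6*Ds^2 + 5*T^2 - 3/2*sb*Ds^2 - sb*T^2) * sb_sq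
  have h5 : (0:ℝ) ≤ 5 - sb := by linarith
  have hsum0 : 0 ≤ 3*(5-sb)*sb*(sb*x^2 + sb/2*Ds^2 + (sb-2)/3*T^2 - 2*x*T - 2*x*Ds) := by
    rw [expand]
    have t1 : (0:ℝ) ≤ 3*(5-sb)*(sb*x-T-Ds)^2 := by positivity
    have t3 : (0:ℝ) ≤ (24-3*sb)*Ds^2 := mul_nonneg (by linarith) (sq_nonneg _)
    nlinarith [sq_nonneg ((5-sb)*T-3*Ds)]
  have hfac : (0:ℝ) < 3*(5-sb)*sb :=
    mul_pos (mul_pos (by norm_num) (by linarith)) (by linarith)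
  have hbr : (0:ℝ) ≤ sb*x^2 + sb/2*Ds^2 + (sb-2)/3*T^2 - 2*x*T - 2*x*Ds := by
    rcases le_or_gt 0 (sb*x^2 + sb/2*Ds^2 + (sb-2)/3*T^2 - 2*x*T - 2*x*Ds) with h|h
    · exact h
    · exact absurd hsum0 (not_le.mpr (mul_neg_of_pos_of_neg hfac h))
  have hA : sb*Ds^2 ≤ sb*(2*(∑ i ∈ E, w i ^ 2)) :=
    mul_le_mul_of_nonneg_left hchebE (by linarith)
  have hB : (sb+1)*T^2 ≤ (sb+1)*(3*QC) := mul_le_mul_of_nonneg_left hchebC (by linarith)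
  have hQE : QE = ∑ i ∈ E, w i ^ 2 := rfl
  rw [← hQE] at hA
  linarith [hA, hB, hbr]

end Quad

open scoped Classical

section Eig
variable {V : Type*} [Fintype V]

lemma eig_le (G : SimpleGraph V) {μ : ℝ} {v : V → ℝ} (hv : v ≠ 0)
    (heq : Matrix.mulVec (Matrix.of fun i j => if G.Adj i j then (1:ℝ) else 0) v = μ • v)
    (hquad : ∀ w : V → ℝ, (∀ i, 0 ≤ w i) →
      ∑ i, ∑ j, (if G.Adj i j then (1:ℝ) else 0) * (w i * w j) ≤ sb * ∑ i, w i ^ 2) :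
    μ ≤ sb := by
  classical
  have hpos : 0 < ∑ i, v i ^ 2 := by
    obtain ⟨i, hi⟩ : ∃ i, v i ≠ 0 := by
      by_contra h; push_neg at h; exact hv (funext h)
    exact Finset.sum_pos' (fun j _ => sq_nonneg _) ⟨i, Finset.mem_univ i, by positivity⟩
  have key : ∀ i, ∑ j, (if G.Adj i j then (1:ℝ) else 0) * v j = μ * v i := by
    intro i
    have h := congrFun heq i
    simpa [Matrix.mulVec, dotProduct] using h
  have hsum : ∑ i, ∑ j, (if G.Adj i j then (1:ℝ) else 0) * (v i * v j) = μ * ∑ i, v i ^ 2 := by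
    have h1 : ∀ i : V, ∑ j, (if G.Adj i j then (1:ℝ) else 0) * (v i * v j)
        = v i * (∑ j, (if G.Adj i j then (1:ℝ) else 0) * v j) := by
      intro i; rw [Finset.mul_sum]; exact Finset.sum_congr rfl (fun j _ => by ring)
    rw [Finset.sum_congr rfl (fun i _ => h1 i)]
    rw [Finset.sum_congr rfl (fun i _ => by rw [key i])]
    rw [Finset.mul_sum]
    exact Finset.sum_congr rfl (fun i _ => by ring)
  have habs : ∑ i, ∑ j, (if G.Adj i j then (1:ℝ) else 0) * (v i * v j)
      ≤ ∑ i, ∑ j, (if G.Adj i j then (1:ℝ) else 0) * (|v i| * |v j|) := by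
    refine Finset.sum_le_sum (fun i _ => Finset.sum_le_sum (fun j _ => ?_))
    have hc : (0:ℝ) ≤ (if G.Adj i j then (1:ℝ) else 0) := by split_ifs <;> norm_num
    refine mul_le_mul_of_nonneg_left ?_ hc
    rw [← abs_mul]; exact le_abs_self _
  have hq := hquad (fun i => |v i|) (fun i => abs_nonneg _)
  have habs2 : ∑ i, |v i| ^ 2 = ∑ i, v i ^ 2 :=
    Finset.sum_congr rfl (fun i _ => sq_abs _)
  rw [habs2] at hq
  have : μ * ∑ i, v i ^ 2 ≤ sb * ∑ i, v i ^ 2 := by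
    rw [← hsum]; exact le_trans habs hq
  exact le_of_mul_le_mul_right this hpos

lemma specRad_le (G : SimpleGraph V)
    (hquad : ∀ w : V → ℝ, (∀ i, 0 ≤ w i) →
      ∑ i, ∑ j, (if G.Adj i j then (1:ℝ) else 0) * (w i * w j) ≤ sb * ∑ i, w i ^ 2) :
    specRad G ≤ sb := by
  refine Real.sSup_le ?_ (by linarith [sb_ge])
  rintro μ ⟨v, hv, heq⟩
  exact eig_le G hv heq hquad

end Eig

section Comp
variable {W : Type*} [Fintype W] (H : SimpleGraph W) [Fintype H.ConnectedComponent]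

lemma sum_card_supp : ∑ c : H.ConnectedComponent, Nat.card c.supp = Fintype.card W := by
  calc ∑ c : H.ConnectedComponent, Nat.card c.supp
      = ∑ c : H.ConnectedComponent, Fintype.card {v // H.connectedComponentMk v = c} := by
        refine Finset.sum_congr rfl (fun c _ => ?_)
        rw [← Nat.card_eq_fintype_card]
        exact Nat.card_congr (Equiv.subtypeEquivRight (fun v => ConnectedComponent.mem_supp_iff c v))
    _ = Fintype.card (Σ c : H.ConnectedComponent, {v // H.connectedComponentMk v = c}) :=
        (Fintype.card_sigma).symm
    _ = Fintype.card W := Fintype.card_congr (Equiv.sigmaFiberEquiv _)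

lemma supp_pos (c : H.ConnectedComponent) : 1 ≤ Nat.card c.supp := by
  obtain ⟨v, hv⟩ := c.exists_rep
  have : Nonempty c.supp := ⟨⟨v, show H.connectedComponentMk v = c from hv⟩⟩
  exact Nat.card_pos

lemma oddComp_eq_filter :
    oddComp H = (Finset.univ.filter (fun c : H.ConnectedComponent => Odd (Nat.card c.supp))).card := by
  rw [oddComp, Nat.card_eq_fintype_card, Fintype.card_subtype]

end Comp

set_option maxHeartbeats 1000000 in
lemma structure_lemma (G : SimpleGraph (Fin 6)) (hconn : G.Connected) (S : Set (Fin 6))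
    (hS : S.ncard + 2 ≤ oddComp (G.induce Sᶜ)) :
    (∃ p q : Fin 6, p ≠ q ∧ ∀ i j, G.Adj i j → i = p ∨ i = q ∨ j = p ∨ j = q) ∨
    (∃ (p : Fin 6) (C : Finset (Fin 6)), p ∉ C ∧ C.card = 3 ∧
      ∀ i j, G.Adj i j → i = p ∨ j = p ∨ (i ∈ C ∧ j ∈ C)) := by
  letI instC : Fintype ↥Sᶜ := Fintype.ofFinite _
  letI instK : Fintype (G.induce Sᶜ).ConnectedComponent := Fintype.ofFinite _
  have hsum : ∑ c : (G.induce Sᶜ).ConnectedComponent, Nat.card c.supp = Fintype.card ↥Sᶜ := sum_card_supp (G.induce Sᶜ)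
  have hNn : Fintype.card (G.induce Sᶜ).ConnectedComponent ≤ Fintype.card ↥Sᶜ := by
    calc Fintype.card (G.induce Sᶜ).ConnectedComponent = ∑ _c : (G.induce Sᶜ).ConnectedComponent, 1 := by
          rw [Finset.sum_const, smul_eq_mul, mul_one, Finset.card_univ]
      _ ≤ ∑ c : (G.induce Sᶜ).ConnectedComponent, Nat.card c.supp :=
          Finset.sum_le_sum (fun c _ => supp_pos (G.induce Sᶜ) c)
      _ = Fintype.card ↥Sᶜ := hsum
  have hoN : oddComp (G.induce Sᶜ) ≤ Fintype.card (G.induce Sᶜ).ConnectedComponent := by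
    rw [oddComp_eq_filter (G.induce Sᶜ), ← Finset.card_univ]
    exact Finset.card_filter_le _ _
  have hn6 : Fintype.card ↥Sᶜ + S.ncard = 6 := by
    rw [← Nat.card_eq_fintype_card, Nat.card_coe_set_eq Sᶜ]
    have := Set.ncard_add_ncard_compl S (Set.toFinite S) (Set.toFinite Sᶜ)
    simp only [Nat.card_eq_fintype_card, Fintype.card_fin] at this
    omega
  have hk2 : S.ncard ≤ 2 := by omega
  have hcase : S.ncard = 0 ∨ S.ncard = 1 ∨ S.ncard = 2 := by omega
  rcases hcase with h0 | h1 | h2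
  · -- S empty: contradiction with connectivity
    exfalso
    have hS0 : S = ∅ := (Set.ncard_eq_zero (Set.toFinite S)).mp h0
    have hSc : Sᶜ = (Set.univ : Set (Fin 6)) := by rw [hS0, Set.compl_empty]
    have hconn' : (G.induce Sᶜ).Connected := by
      rw [hSc]
      exact (induceUnivIso G).connected_iff.mpr hconn
    have hsub : Subsingleton (G.induce Sᶜ).ConnectedComponent := by
      constructor
      refine ConnectedComponent.ind₂ (fun x y => ?_)
      exact ConnectedComponent.sound (hconn'.preconnected x y)
    have : Fintype.card (G.induce Sᶜ).ConnectedComponent ≤ 1 := Fintype.card_le_one_iff_subsingleton.mpr hsub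
    omega
  · -- |S| = 1
    right
    obtain ⟨p, hS1⟩ := (Set.ncard_eq_one).mp h1
    have hNpos : 0 < Fintype.card (G.induce Sᶜ).ConnectedComponent := by omega
    have hnonempty : (Finset.univ : Finset (G.induce Sᶜ).ConnectedComponent).Nonempty := by
      rw [← Finset.card_pos, Finset.card_univ]; exact hNpos
    obtain ⟨c0, -, hmax⟩ := Finset.exists_max_image Finset.univ
      (fun c : (G.induce Sᶜ).ConnectedComponent => Nat.card c.supp) hnonempty
    have hn5 : Fintype.card ↥Sᶜ = 5 := by omega
    have hrest : ∀ c : (G.induce Sᶜ).ConnectedComponent,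
        (Finset.univ.erase c).card • 1 ≤ ∑ d ∈ Finset.univ.erase c, Nat.card d.supp :=
      fun c => Finset.card_nsmul_le_sum _ _ _ (fun d _ => supp_pos (G.induce Sᶜ) d)
    have hsing : ∀ d : (G.induce Sᶜ).ConnectedComponent, d ≠ c0 → Nat.card d.supp = 1 := by
      intro d hd
      by_contra h1'
      have h2 : 2 ≤ Nat.card d.supp := by have := supp_pos (G.induce Sᶜ) d; omega
      have hc2 : 2 ≤ Nat.card c0.supp := le_trans h2 (hmax d (Finset.mem_univ d))
      have hdmem : d ∈ Finset.univ.erase c0 := Finset.mem_erase.mpr ⟨hd, Finset.mem_univ d⟩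
      have hs1 : ∑ c : (G.induce Sᶜ).ConnectedComponent, Nat.card c.supp
          = Nat.card c0.supp + ∑ c ∈ Finset.univ.erase c0, Nat.card c.supp :=
        (Finset.add_sum_erase _ _ (Finset.mem_univ c0)).symm
      have hs2 : ∑ c ∈ Finset.univ.erase c0, Nat.card c.supp
          = Nat.card d.supp + ∑ c ∈ (Finset.univ.erase c0).erase d, Nat.card c.supp :=
        (Finset.add_sum_erase _ _ hdmem).symm
      have hs3 : ((Finset.univ.erase c0).erase d).card • 1
          ≤ ∑ c ∈ (Finset.univ.erase c0).erase d, Nat.card c.supp :=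
        Finset.card_nsmul_le_sum _ _ _ (fun e _ => supp_pos (G.induce Sᶜ) e)
      have hcard1 : (Finset.univ.erase c0).card = Fintype.card (G.induce Sᶜ).ConnectedComponent - 1 := by
        rw [Finset.card_erase_of_mem (Finset.mem_univ c0), Finset.card_univ]
      have hcard2 : ((Finset.univ.erase c0).erase d).card = Fintype.card (G.induce Sᶜ).ConnectedComponent - 2 := by
        rw [Finset.card_erase_of_mem hdmem, hcard1]
        omega
      rw [hcard2, smul_eq_mul, mul_one] at hs3
      have hN3 : Fintype.card (G.induce Sᶜ).ConnectedComponent = 3 := by omega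
      have hodd3 : 3 ≤ (Finset.univ.filter
          (fun c : (G.induce Sᶜ).ConnectedComponent => Odd (Nat.card c.supp))).card := by
        rw [← oddComp_eq_filter (G.induce Sᶜ)]; omega
      have hfilt : (Finset.univ.filter
          (fun c : (G.induce Sᶜ).ConnectedComponent => Odd (Nat.card c.supp))) = Finset.univ := by
        apply Finset.eq_univ_of_card
        have hle : (Finset.univ.filter
            (fun c : (G.induce Sᶜ).ConnectedComponent => Odd (Nat.card c.supp))).card ≤ Fintype.card (G.induce Sᶜ).ConnectedComponent := by
          rw [← Finset.card_univ]; exact Finset.card_filter_le _ _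
        omega
      have hoddc0 : Odd (Nat.card c0.supp) := by
        have := Finset.mem_filter.mp (hfilt ▸ Finset.mem_univ c0)
        exact this.2
      have hoddd : Odd (Nat.card d.supp) := by
        have := Finset.mem_filter.mp (hfilt ▸ Finset.mem_univ d)
        exact this.2
      rw [Nat.odd_iff] at hoddc0 hoddd
      omega
    have hbig : Nat.card c0.supp ≤ 3 := by
      have hs1 : ∑ c : (G.induce Sᶜ).ConnectedComponent, Nat.card c.supp
          = Nat.card c0.supp + ∑ c ∈ Finset.univ.erase c0, Nat.card c.supp :=
        (Finset.add_sum_erase _ _ (Finset.mem_univ c0)).symm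
      have hs3 := hrest c0
      have hcard1 : (Finset.univ.erase c0).card = Fintype.card (G.induce Sᶜ).ConnectedComponent - 1 := by
        rw [Finset.card_erase_of_mem (Finset.mem_univ c0), Finset.card_univ]
      rw [hcard1, smul_eq_mul, mul_one] at hs3
      have hN3 : 3 ≤ Fintype.card (G.induce Sᶜ).ConnectedComponent := by omega
      omega
    -- build C0
    set C0 : Finset (Fin 6) := (Subtype.val '' c0.supp).toFinset with hC0
    have hC0card : C0.card = Nat.card c0.supp := by
      rw [hC0, ← Set.ncard_eq_toFinset_card', Set.ncard_image_of_injective _ Subtype.val_injective]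
      exact (Nat.card_coe_set_eq _).symm
    have hpS : p ∈ S := by rw [hS1]; exact Set.mem_singleton p
    have hC0sub : C0 ⊆ Finset.univ.erase p := by
      intro i hi
      rw [hC0, Set.mem_toFinset] at hi
      obtain ⟨x, -, hx⟩ := hi
      refine Finset.mem_erase.mpr ⟨?_, Finset.mem_univ i⟩
      intro hip
      have : i ∈ Sᶜ := hx ▸ x.2
      rw [hip] at this
      exact this hpS
    have hcarderase : (Finset.univ.erase p).card = 5 := by
      rw [Finset.card_erase_of_mem (Finset.mem_univ p), Finset.card_univ, Fintype.card_fin]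
    obtain ⟨C, hC0C, hCsub, hCcard⟩ :=
      Finset.exists_subsuperset_card_eq hC0sub (by omega : C0.card ≤ 3) (by omega)
    refine ⟨p, C, fun hpc => (Finset.mem_erase.mp (hCsub hpc)).1 rfl, hCcard, ?_⟩
    intro i j hA
    by_cases hip : i = p
    · exact Or.inl hip
    by_cases hjp : j = p
    · exact Or.inr (Or.inl hjp)
    refine Or.inr (Or.inr ?_)
    have hiS : i ∈ Sᶜ := by rw [hS1]; exact hip
    have hjS : j ∈ Sᶜ := by rw [hS1]; exact hjp
    have hadj : (G.induce Sᶜ).Adj ⟨i, hiS⟩ ⟨j, hjS⟩ := hA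
    have hmkij : (G.induce Sᶜ).connectedComponentMk ⟨i, hiS⟩ = (G.induce Sᶜ).connectedComponentMk ⟨j, hjS⟩ :=
      ConnectedComponent.sound hadj.reachable
    have hne : (⟨i, hiS⟩ : ↥Sᶜ) ≠ ⟨j, hjS⟩ := fun hh => hA.ne (congrArg Subtype.val hh)
    have h2 : 2 ≤ Nat.card ((G.induce Sᶜ).connectedComponentMk ⟨i, hiS⟩).supp := by
      have hnt : Nontrivial ((G.induce Sᶜ).connectedComponentMk ⟨i, hiS⟩).supp :=
        ⟨⟨⟨⟨i, hiS⟩, rfl⟩, ⟨⟨j, hjS⟩, hmkij.symm⟩,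
          fun hh => hne (congrArg Subtype.val hh)⟩⟩
      exact Finite.one_lt_card_iff_nontrivial.mpr hnt
    have hdc0 : (G.induce Sᶜ).connectedComponentMk ⟨i, hiS⟩ = c0 := by
      by_contra hdc
      have := hsing _ hdc
      omega
    have hiC0 : i ∈ C0 := by
      rw [hC0, Set.mem_toFinset]
      exact ⟨⟨i, hiS⟩, hdc0, rfl⟩
    have hjC0 : j ∈ C0 := by
      rw [hC0, Set.mem_toFinset]
      exact ⟨⟨j, hjS⟩, hmkij.symm.trans hdc0, rfl⟩
    exact ⟨hC0C hiC0, hC0C hjC0⟩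
  · -- |S| = 2
    left
    obtain ⟨p, q, hpq, hS2⟩ := (Set.ncard_eq_two).mp h2
    have hn4 : Fintype.card ↥Sᶜ = 4 := by omega
    have hall1 : ∀ c : (G.induce Sᶜ).ConnectedComponent, Nat.card c.supp = 1 := by
      intro c
      by_contra h1'
      have h2' : 2 ≤ Nat.card c.supp := by have := supp_pos (G.induce Sᶜ) c; omega
      have hs1 : ∑ e : (G.induce Sᶜ).ConnectedComponent, Nat.card e.supp
          = Nat.card c.supp + ∑ e ∈ Finset.univ.erase c, Nat.card e.supp :=
        (Finset.add_sum_erase _ _ (Finset.mem_univ c)).symm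
      have hs3 : (Finset.univ.erase c).card • 1 ≤ ∑ e ∈ Finset.univ.erase c, Nat.card e.supp :=
        Finset.card_nsmul_le_sum _ _ _ (fun e _ => supp_pos (G.induce Sᶜ) e)
      have hcard1 : (Finset.univ.erase c).card = Fintype.card (G.induce Sᶜ).ConnectedComponent - 1 := by
        rw [Finset.card_erase_of_mem (Finset.mem_univ c), Finset.card_univ]
      rw [hcard1, smul_eq_mul, mul_one] at hs3
      omega
    refine ⟨p, q, hpq, ?_⟩
    intro i j hA
    by_contra hcon
    push_neg at hcon
    obtain ⟨hip, hiq, hjp, hjq⟩ := hcon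
    have hiS : i ∈ Sᶜ := by rw [hS2]; simp [hip, hiq]
    have hjS : j ∈ Sᶜ := by rw [hS2]; simp [hjp, hjq]
    have hadj : (G.induce Sᶜ).Adj ⟨i, hiS⟩ ⟨j, hjS⟩ := hA
    have hmkij : (G.induce Sᶜ).connectedComponentMk ⟨i, hiS⟩
        = (G.induce Sᶜ).connectedComponentMk ⟨j, hjS⟩ :=
      ConnectedComponent.sound hadj.reachable
    have hne : (⟨i, hiS⟩ : ↥Sᶜ) ≠ ⟨j, hjS⟩ := fun hh => hA.ne (congrArg Subtype.val hh)
    have h2' : 2 ≤ Nat.card ((G.induce Sᶜ).connectedComponentMk ⟨i, hiS⟩).supp := by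
      have hnt : Nontrivial ((G.induce Sᶜ).connectedComponentMk ⟨i, hiS⟩).supp :=
        ⟨⟨⟨⟨i, hiS⟩, rfl⟩, ⟨⟨j, hjS⟩, hmkij.symm⟩,
          fun hh => hne (congrArg Subtype.val hh)⟩⟩
      exact Finite.one_lt_card_iff_nontrivial.mpr hnt
    have := hall1 ((G.induce Sᶜ).connectedComponentMk ⟨i, hiS⟩)
    omega

section K
abbrev KG : SimpleGraph (Fin 2 ⊕ Fin 4) := gJoin (⊤ : SimpleGraph (Fin 2)) (⊥ : SimpleGraph (Fin 4))

lemma K_adj_ll (a b : Fin 2) : KG.Adj (.inl a) (.inl b) ↔ a ≠ b := by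
  simp [gJoin, KG]

lemma K_adj_lr (a : Fin 2) (b : Fin 4) : KG.Adj (.inl a) (.inr b) := by
  simp [gJoin, KG]

lemma K_adj_rl (a : Fin 4) (b : Fin 2) : KG.Adj (.inr a) (.inl b) := by
  simp [gJoin, KG]

lemma K_adj_rr (a b : Fin 4) : ¬ KG.Adj (.inr a) (.inr b) := by
  simp [gJoin, KG]


lemma K_cover : ∀ i j, KG.Adj i j →
    i = Sum.inl 0 ∨ i = Sum.inl 1 ∨ j = Sum.inl 0 ∨ j = Sum.inl 1 := by
  have h01 : ∀ b : Fin 2, b = 0 ∨ b = 1 := by decide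
  intro i j h
  rcases i with a | a
  · rcases h01 a with h' | h' <;> subst h' <;> simp
  · rcases j with b | b
    · rcases h01 b with h' | h' <;> subst h' <;> simp
    · exact absurd h (K_adj_rr a b)

lemma K_quad : ∀ w : Fin 2 ⊕ Fin 4 → ℝ, (∀ i, 0 ≤ w i) →
    ∑ i, ∑ j, (if KG.Adj i j then (1:ℝ) else 0) * (w i * w j) ≤ sb * ∑ i, w i ^ 2 := by
  intro w hw
  exact quadB (by simp) (Sum.inl 0) (Sum.inl 1) (by simp) K_cover w hw

lemma K_eigvec : Matrix.mulVec (Matrix.of fun i j => if KG.Adj i j then (1:ℝ) else 0)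
    (Sum.elim (fun _ => sb) (fun _ => 2))
    = sb • (Sum.elim (fun _ => sb) (fun _ => (2:ℝ))) := by
  funext x
  have hb := sb_sq
  rcases x with a | a
  · simp only [Matrix.mulVec, dotProduct, Matrix.of_apply, Fintype.sum_sum_type,
      Sum.elim_inl, Sum.elim_inr, Pi.smul_apply, smul_eq_mul]
    have h1 : ∀ b : Fin 4, (if KG.Adj (.inl a) (.inr b) then (1:ℝ) else 0) * 2 = 2 := by
      intro b; rw [if_pos (K_adj_lr a b)]; ring
    rw [Finset.sum_congr rfl (fun b _ => h1 b), Finset.sum_const]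
    have h2 : ∑ b : Fin 2, (if KG.Adj (.inl a) (.inl b) then (1:ℝ) else 0) * sb = sb := by
      have : ∀ b : Fin 2, (if KG.Adj (.inl a) (.inl b) then (1:ℝ) else 0)
          = (if a = b then 0 else 1) := by
        intro b
        by_cases hab : a = b
        · rw [if_pos hab, if_neg (by rw [K_adj_ll]; exact fun h => h hab)]
        · rw [if_neg hab, if_pos ((K_adj_ll a b).mpr hab)]
      rw [Finset.sum_congr rfl (fun b _ => by rw [this b])]
      fin_cases a <;> simp [Fin.sum_univ_two]
    rw [h2]
    simp only [Finset.card_univ, Fintype.card_fin, nsmul_eq_mul]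
    push_cast
    nlinarith [hb]
  · simp only [Matrix.mulVec, dotProduct, Matrix.of_apply, Fintype.sum_sum_type,
      Sum.elim_inl, Sum.elim_inr, Pi.smul_apply, smul_eq_mul]
    have h1 : ∀ b : Fin 2, (if KG.Adj (.inr a) (.inl b) then (1:ℝ) else 0) * sb = sb := by
      intro b; rw [if_pos (K_adj_rl a b)]; ring
    have h2 : ∀ b : Fin 4, (if KG.Adj (.inr a) (.inr b) then (1:ℝ) else 0) * 2 = 0 := by
      intro b; rw [if_neg (K_adj_rr a b)]; ring
    rw [Finset.sum_congr rfl (fun b _ => h1 b), Finset.sum_congr rfl (fun b _ => h2 b)]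
    simp [Fin.sum_univ_two]
    ring

lemma specRad_K : specRad KG = sb := by
  have hub : ∀ μ ∈ {μ : ℝ | ∃ v : (Fin 2 ⊕ Fin 4) → ℝ, v ≠ 0 ∧
      Matrix.mulVec (Matrix.of fun i j => if KG.Adj i j then (1:ℝ) else 0) v = μ • v}, μ ≤ sb := by
    rintro μ ⟨v, hv, heq⟩
    exact eig_le KG hv heq K_quad
  refine le_antisymm (Real.sSup_le hub (by linarith [sb_ge])) ?_
  refine le_csSup ⟨sb, hub⟩ ?_
  refine ⟨Sum.elim (fun _ => sb) (fun _ => 2), ?_, K_eigvec⟩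
  intro h
  have := congrFun h (Sum.inl 0)
  simp only [Sum.elim_inl, Pi.zero_apply] at this
  linarith [sb_ge]

end K


theorem spectral_bound_of_many_odd_components_six (G : SimpleGraph (Fin 6))
    (hconn : G.Connected)
    (S : Set (Fin 6)) (hS : S.ncard + 2 ≤ oddComp (G.induce Sᶜ)) :
    specRad G ≤ (1 + Real.sqrt 33) / 2 ∧
    specRad (gJoin (⊤ : SimpleGraph (Fin 2)) (⊥ : SimpleGraph (Fin 4))) =
      (1 + Real.sqrt 33) / 2 := by
  have hsb : sb = (1 + Real.sqrt 33) / 2 := rfl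
  constructor
  · rw [← hsb]
    letI : DecidableRel G.Adj := fun a b => Classical.propDecidable _
    rcases structure_lemma G hconn S hS with ⟨p, q, hpq, hcov⟩ | ⟨p, C, hpC, hC, hcov⟩
    · exact specRad_le G (fun w hw => quadB (by simp) p q hpq hcov w hw)
    · exact specRad_le G (fun w hw => quadA (by simp) p C hpC hC hcov w hw)
  · rw [← hsb]
    exact specRad_K
end

section
/- Let n be an even integer with n ≥ 8 or n = 4, and let G be a connected graph on n vertices such that there exists S ⊆ V(G) with o(G − S) ≥ |S| + 2. Then ρ(G) ≤ θ(n), where θ(n) is the largest root of x^3 − (n−4)x^2 − (n−1)x + 2(n−4) = 0; moreover ρ(K_1 ∨ (K_{n-3} ∪ 2K_1)) = θ(n). -/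
open SimpleGraph

/-!
Such a graph is a spanning subgraph of some `K_s ∨ (K_{n₁} ∪ ⋯ ∪ K_{n_{s+2}})` with `s = |S| ≥ 1`
(join `S` to everything and merge the components of `G - S` into `s + 2` cliques), and
`vᵀ A(G) v ≤ |v|ᵀ A(H) |v|` for `G ≤ H`, so it suffices to bound every eigenvalue `μ` of such a
graph. Summing the eigenvalue equations over `S` and over each clique gives the secular equation
`μ + 1 - s = s ∑ nᵢ / (μ + 1 - nᵢ)` once `μ + 1 > max nᵢ`. Its right side decreases in `μ` and, by
convexity of `x ↦ x / (c - x)`, is largest when all cliques but one are single vertices; for that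
partition the inequality at `μ = θ` is the cubic plus a term vanishing at `s = 1` and nonnegative
for `n ≥ 8`. For `s = 1` the extremal graph is `K_1 ∨ (K_{n-3} ∪ 2K_1)`, whose secular equation
at `θ` is exactly the cubic.
-/

open Finset Matrix

def thetaCubic (n x : ℝ) : ℝ := x ^ 3 - (n - 4) * x ^ 2 - (n - 1) * x + 2 * (n - 4)

theorem exists_thetaCubic_root_gt (n : ℕ) : ∃ x : ℝ, (n : ℝ) - 3 < x ∧ thetaCubic n x = 0 := by
  have hcont : ContinuousOn (thetaCubic n) (Set.Icc ((n : ℝ) - 3) (n + 2)) := by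
    unfold thetaCubic; fun_prop
  have hn : (0 : ℝ) ≤ n := n.cast_nonneg
  obtain ⟨x, hx, hx0⟩ := intermediate_value_Ioo (by linarith) hcont
    (show (0 : ℝ) ∈ Set.Ioo (thetaCubic n (n - 3)) (thetaCubic n (n + 2)) by
      constructor <;> unfold thetaCubic <;> nlinarith)
  exact ⟨x, hx.1, hx0⟩

theorem div_sub_add_div_sub_le {a b c : ℝ} (ha : 1 ≤ a) (hb : 1 ≤ b) (hc : a + b - 1 < c) :
    a / (c - a) + b / (c - b) ≤ 1 / (c - 1) + (a + b - 1) / (c - (a + b - 1)) := by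
  have h1 : 0 < c - (a + b - 1) := by linarith
  have h2 : 0 < c - a := by linarith
  have h3 : 0 < c - b := by linarith
  have h4 : 0 < c - 1 := by linarith
  rw [div_add_div _ _ h2.ne' h3.ne', div_add_div _ _ h4.ne' h1.ne',
    div_le_div_iff₀ (by positivity) (by positivity)]
  have hab := mul_nonneg (sub_nonneg.2 ha) (sub_nonneg.2 hb)
  nlinarith [mul_pos h2 h3, mul_pos h4 h1, mul_nonneg hab h1.le, mul_nonneg hab h4.le,
    mul_nonneg (mul_nonneg hab h4.le) h1.le]

-- With the excess `∑ (aₖ - 1)` fixed, the sum is largest when all but one `aₖ` equal `1`.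
theorem sum_div_sub_le {ι : Type*} (s : Finset ι) {a : ι → ℝ} {c : ℝ} (ha : ∀ k ∈ s, 1 ≤ a k)
    (hc : ∑ k ∈ s, (a k - 1) + 1 < c) :
    ∑ k ∈ s, a k / (c - a k) ≤
      (∑ k ∈ s, (a k - 1) + 1) / (c - (∑ k ∈ s, (a k - 1) + 1)) + (#s - 1) / (c - 1) := by
  induction s using Finset.cons_induction with
  | empty => simp [neg_div]
  | cons j s hj ih =>
    simp only [mem_cons, forall_eq_or_imp] at ha
    rw [sum_cons, add_assoc] at hc
    rw [sum_cons, sum_cons, add_assoc, card_cons]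
    set B := ∑ k ∈ s, (a k - 1) + 1
    have hB : 1 ≤ B := by simpa [B] using sum_nonneg fun k hk => sub_nonneg.2 (ha.2 k hk)
    have hpair := div_sub_add_div_sub_le ha.1 hB (by linarith)
    have hrest := ih ha.2 (by linarith)
    rw [show a j + B - 1 = a j - 1 + B by ring] at hpair
    have hcard : ((#s + 1 : ℕ) - 1 : ℝ) / (c - 1) = 1 / (c - 1) + (#s - 1) / (c - 1) := by
      push_cast; ring
    linarith

theorem secular_extremal_le {n s : ℕ} {θ : ℝ} (hn : 8 ≤ n ∨ n = 4) (hs : 1 ≤ s)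
    (hsn : 2 * s + 2 ≤ n) (hθ : thetaCubic n θ = 0) (hθn : (n : ℝ) - 3 < θ) :
    (s : ℝ) * ((n - 2 * s - 1) / (θ + 1 - (n - 2 * s - 1)) + (s + 1) / θ) ≤ θ + 1 - s := by
  have hs' : (1 : ℝ) ≤ s := by exact_mod_cast hs
  have hsn' : 2 * (s : ℝ) + 2 ≤ n := by exact_mod_cast hsn
  have hθ0 : 0 < θ := by linarith
  have hD : 0 < θ + 1 - (n - 2 * s - 1) := by linarith
  rw [div_add_div _ _ hD.ne' hθ0.ne', mul_div_assoc', div_le_iff₀ (by positivity)]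
  suffices 0 ≤ (s - 1) * (θ * (θ - s - 1)) + (n - 4) * s ^ 2 + (n - 2) * s - 2 * s ^ 3
      - 2 * (n - 4 : ℝ) by
    unfold thetaCubic at hθ
    linear_combination this - hθ
  rcases hs.eq_or_lt with rfl | hs2
  · push_cast; linarith
  have hn8 : (8 : ℝ) ≤ n := by
    rcases hn with h | rfl
    · exact_mod_cast h
    · omega
  have hs2' : (2 : ℝ) ≤ s := by exact_mod_cast hs2
  have hθs : ((n : ℝ) - 3) * (n - s - 4) ≤ θ * (θ - s - 1) :=
    mul_le_mul hθn.le (by linarith) (by linarith) hθ0.le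
  have e2 : (0 : ℝ) ≤ n - 2 * s - 2 := by linarith
  have e3 : (0 : ℝ) ≤ s - 2 := by linarith
  have e5 : (0 : ℝ) ≤ n - 8 := by linarith
  nlinarith [mul_le_mul_of_nonneg_left hθs (by linarith : (0 : ℝ) ≤ s - 1), mul_nonneg e3 e5,
    mul_nonneg (mul_nonneg e3 e3) e3, mul_nonneg e3 e2, mul_nonneg (mul_nonneg e3 e3) e2,
    mul_nonneg e2 e2, mul_nonneg e3 (mul_nonneg e2 e2), mul_nonneg e2 e5]

section Spectrum

variable {V : Type*} [Fintype V]

def adjEigenvalues (G : SimpleGraph V) [DecidableRel G.Adj] : Set ℝ :=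
  {μ | ∃ v : V → ℝ, v ≠ 0 ∧ G.adjMatrix ℝ *ᵥ v = μ • v}

lemma mem_adjEigenvalues {G : SimpleGraph V} [DecidableRel G.Adj] {μ : ℝ} :
    μ ∈ adjEigenvalues G ↔ ∃ v : V → ℝ, v ≠ 0 ∧ G.adjMatrix ℝ *ᵥ v = μ • v :=
  Iff.rfl

lemma specRad_eq_sSup_adjEigenvalues (G : SimpleGraph V) [DecidableRel G.Adj] :
    specRad G = sSup (adjEigenvalues G) := by
  unfold specRad adjEigenvalues adjMatrix
  congr!

lemma dotProduct_mulVec_le_of_isHermitian {M : Matrix V V ℝ} (hM : M.IsHermitian)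
    {θ : ℝ} (hθ : ∀ μ (v : V → ℝ), v ≠ 0 → M *ᵥ v = μ • v → μ ≤ θ) (x : V → ℝ) :
    x ⬝ᵥ M *ᵥ x ≤ θ * (x ⬝ᵥ x) := by
  classical
  have hN : (θ • (1 : Matrix V V ℝ) - M).IsHermitian := by
    simpa [IsHermitian] using (isHermitian_iff_isSymm.1 hM).eq
  have hpsd : (θ • (1 : Matrix V V ℝ) - M).PosSemidef := by
    refine hN.posSemidef_iff_eigenvalues_nonneg.2 fun i => ?_
    have hi := hN.mulVec_eigenvectorBasis i
    rw [sub_mulVec, smul_mulVec, one_mulVec] at hi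
    have hne : ⇑(hN.eigenvectorBasis i) ≠ 0 := fun h =>
      hN.eigenvectorBasis.orthonormal.ne_zero i (by ext j; simpa using congrFun h j)
    have := hθ (θ - hN.eigenvalues i) _ hne (by rw [sub_smul, ← hi]; abel)
    simp only [Pi.zero_apply]
    linarith
  have := hpsd.dotProduct_mulVec_nonneg x
  rw [star_trivial, sub_mulVec, smul_mulVec, one_mulVec, dotProduct_sub, dotProduct_smul,
    smul_eq_mul] at this
  linarith

lemma upperBounds_adjEigenvalues_subset_of_le {G H : SimpleGraph V} [DecidableRel G.Adj]
    [DecidableRel H.Adj] (hGH : G ≤ H) :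
    upperBounds (adjEigenvalues H) ⊆ upperBounds (adjEigenvalues G) := by
  rintro θ hθ μ ⟨v, hv, hμv⟩
  set w : V → ℝ := fun i => |v i|
  have hGH' : v ⬝ᵥ G.adjMatrix ℝ *ᵥ v ≤ w ⬝ᵥ H.adjMatrix ℝ *ᵥ w := by
    rw [dotProduct_mulVec_adjMatrix, dotProduct_mulVec_adjMatrix]
    refine sum_le_sum fun i _ => sum_le_sum fun j _ => ?_
    by_cases hG : G.Adj i j
    · simp [w, hG, hGH hG, ← abs_mul, le_abs_self]
    · by_cases hH : H.Adj i j <;> simp [w, hG, hH, mul_nonneg]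
  have hθH := dotProduct_mulVec_le_of_isHermitian (H.isHermitian_adjMatrix ℝ)
    (fun μ v hv h => hθ ⟨v, hv, h⟩) w
  have hw : w ⬝ᵥ w = v ⬝ᵥ v := by simp [w, dotProduct, abs_mul_abs_self]
  have hvv : 0 < v ⬝ᵥ v := by simpa using dotProduct_self_star_pos_iff.2 hv
  rw [hμv, dotProduct_smul, smul_eq_mul] at hGH'
  rw [hw] at hθH
  exact le_of_mul_le_mul_right (hGH'.trans hθH) hvv

lemma specRad_le_s13 {G : SimpleGraph V} [DecidableRel G.Adj] {θ : ℝ} (hθ : 0 ≤ θ)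
    (h : θ ∈ upperBounds (adjEigenvalues G)) : specRad G ≤ θ := by
  rw [specRad_eq_sSup_adjEigenvalues]
  exact Real.sSup_le h hθ

lemma specRad_eq_of_isGreatest {G : SimpleGraph V} [DecidableRel G.Adj] {θ : ℝ}
    (h : IsGreatest (adjEigenvalues G) θ) : specRad G = θ := by
  rw [specRad_eq_sSup_adjEigenvalues]
  exact h.csSup_eq

end Spectrum

section JoinCliques

variable {V ι : Type*}

/-- `K_S ∨ ⋃ₖ K_{p⁻¹(k) \ S}`; the values of `p` on `S` play no role. -/
def joinCliques (S : Finset V) (p : V → ι) : SimpleGraph V where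
  Adj u v := u ≠ v ∧ (u ∈ S ∨ v ∈ S ∨ p u = p v)
  symm := ⟨fun _ _ h => ⟨h.1.symm, by tauto⟩⟩
  loopless := ⟨fun _ h => h.1 rfl⟩

@[simp]
lemma joinCliques_adj {S : Finset V} {p : V → ι} {u v : V} :
    (joinCliques S p).Adj u v ↔ u ≠ v ∧ (u ∈ S ∨ v ∈ S ∨ p u = p v) :=
  Iff.rfl

variable [Fintype V] [DecidableEq V] [DecidableEq ι]

instance (S : Finset V) (p : V → ι) : DecidableRel (joinCliques S p).Adj :=
  fun _ _ => inferInstanceAs (Decidable (_ ∧ _))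

def cliquePart (S : Finset V) (p : V → ι) (k : ι) : Finset V := {v ∈ Sᶜ | p v = k}

variable {S : Finset V} {p : V → ι}

lemma mem_cliquePart {k : ι} {v : V} : v ∈ cliquePart S p k ↔ v ∉ S ∧ p v = k := by
  simp [cliquePart]

lemma insert_neighborFinset_joinCliques_of_mem {u : V} (hu : u ∈ S) :
    insert u ((joinCliques S p).neighborFinset u) = univ := by
  ext w
  by_cases h : w = u <;> simp [h, hu, Ne.symm]

lemma insert_neighborFinset_joinCliques_of_notMem {u : V} (hu : u ∉ S) :
    insert u ((joinCliques S p).neighborFinset u) = S ∪ cliquePart S p (p u) := by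
  ext w
  by_cases h : w = u
  · simp [h, mem_cliquePart, hu]
  · simp [mem_cliquePart, h, hu, Ne.symm h, eq_comm]
    tauto

lemma adjMatrix_joinCliques_mulVec_add_of_mem (x : V → ℝ) {u : V} (hu : u ∈ S) :
    ((joinCliques S p).adjMatrix ℝ *ᵥ x) u + x u = ∑ w, x w := by
  rw [adjMatrix_mulVec_apply, add_comm, ← sum_insert (by simp),
    insert_neighborFinset_joinCliques_of_mem hu]

lemma adjMatrix_joinCliques_mulVec_add_of_notMem (x : V → ℝ) {u : V} (hu : u ∉ S) :
    ((joinCliques S p).adjMatrix ℝ *ᵥ x) u + x u =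
      ∑ w ∈ S, x w + ∑ w ∈ cliquePart S p (p u), x w := by
  rw [adjMatrix_mulVec_apply, add_comm, ← sum_insert (by simp),
    insert_neighborFinset_joinCliques_of_notMem hu, sum_union]
  exact disjoint_left.2 fun w hw hw' => (mem_cliquePart.1 hw').1 hw

variable [Fintype ι]

lemma sum_eq_sum_add_sum_cliquePart (x : V → ℝ) :
    ∑ w, x w = ∑ w ∈ S, x w + ∑ k, ∑ w ∈ cliquePart S p k, x w := by
  rw [← sum_add_sum_compl S, ← sum_fiberwise Sᶜ p]
  rfl

lemma sum_card_cliquePart : ∑ k, #(cliquePart S p k) = Fintype.card V - #S := by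
  rw [← card_compl, card_eq_sum_card_fiberwise (f := p) (t := univ) fun _ _ => mem_univ _]
  rfl

lemma sum_card_cliquePart_sub_one :
    ∑ k, ((#(cliquePart S p k) : ℝ) - 1) + 1 = Fintype.card V - #S - Fintype.card ι + 1 := by
  rw [sum_sub_distrib, ← Nat.cast_sum, sum_card_cliquePart, Nat.cast_sub (card_le_univ S),
    sum_const, card_univ, nsmul_one]

theorem secular_eq_of_mem_adjEigenvalues_joinCliques {μ : ℝ}
    (hμA : μ ∈ adjEigenvalues (joinCliques S p)) (hμ : μ + 1 ≠ 0)
    (hμp : ∀ k, μ + 1 ≠ #(cliquePart S p k)) :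
    μ + 1 - #S = #S * ∑ k, (#(cliquePart S p k) : ℝ) / (μ + 1 - #(cliquePart S p k)) := by
  obtain ⟨v, hv, hμv⟩ := hμA
  set W := ∑ w ∈ S, v w
  set σ : ι → ℝ := fun k => ∑ w ∈ cliquePart S p k, v w
  have hin : ∀ u ∈ S, (μ + 1) * v u = ∑ w, v w := fun u hu => by
    rw [← adjMatrix_joinCliques_mulVec_add_of_mem (p := p) v hu, hμv, Pi.smul_apply,
      smul_eq_mul]
    ring
  have hout : ∀ u ∉ S, (μ + 1) * v u = W + σ (p u) := fun u hu => by
    rw [← adjMatrix_joinCliques_mulVec_add_of_notMem v hu, hμv, Pi.smul_apply, smul_eq_mul]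
    ring
  have hσ : ∀ k, σ k = #(cliquePart S p k) / (μ + 1 - #(cliquePart S p k)) * W := by
    intro k
    have hsum : (μ + 1) * σ k = #(cliquePart S p k) * (W + σ k) := by
      rw [mul_sum, ← nsmul_eq_mul, ← sum_const]
      refine sum_congr rfl fun u hu => ?_
      rw [mem_cliquePart] at hu
      rw [hout u hu.1, hu.2]
    rw [div_mul_eq_mul_div, eq_div_iff (sub_ne_zero.2 (hμp k))]
    linear_combination hsum
  have hT : ∑ w, v w =
      W + (∑ k, (#(cliquePart S p k) : ℝ) / (μ + 1 - #(cliquePart S p k))) * W := by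
    rw [sum_eq_sum_add_sum_cliquePart (S := S) (p := p), sum_mul]
    exact congrArg (W + ·) (sum_congr rfl fun k _ => hσ k)
  have hW : (μ + 1) * W = #S * ∑ w, v w := by
    rw [mul_sum, ← nsmul_eq_mul, ← sum_const]
    exact sum_congr rfl hin
  have hW0 : W ≠ 0 := by
    intro hW0
    refine hv (funext fun u => ?_)
    by_cases hu : u ∈ S
    · have h := hin u hu
      rw [hT, hW0] at h
      simpa [hμ] using h
    · have h := hout u hu
      rw [hσ, hW0] at h
      simpa [hμ] using h
  rw [hT] at hW
  apply mul_right_cancel₀ hW0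
  linear_combination hW

theorem mem_adjEigenvalues_joinCliques_of_secular {μ : ℝ} (hS : S.Nonempty)
    (hμp : ∀ k, μ + 1 ≠ #(cliquePart S p k))
    (h : μ + 1 - #S = #S * ∑ k, (#(cliquePart S p k) : ℝ) / (μ + 1 - #(cliquePart S p k))) :
    μ ∈ adjEigenvalues (joinCliques S p) := by
  rw [mem_adjEigenvalues]
  set a : ι → ℝ := fun k => #(cliquePart S p k)
  set v : V → ℝ := fun u => if u ∈ S then 1 else #S / (μ + 1 - a (p u))
  have hW : ∑ w ∈ S, v w = #S := by
    rw [sum_congr rfl fun w hw => if_pos hw]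
    simp
  have hσ : ∀ k, ∑ w ∈ cliquePart S p k, v w = a k * (#S / (μ + 1 - a k)) := by
    intro k
    rw [sum_congr rfl fun w hw => ?_, sum_const, nsmul_eq_mul]
    rw [mem_cliquePart] at hw
    simp only [v, if_neg hw.1, hw.2]
  obtain ⟨u₀, hu₀⟩ := hS
  refine ⟨v, fun h0 => by simpa [v, hu₀] using congrFun h0 u₀, funext fun u => ?_⟩
  rw [Pi.smul_apply, smul_eq_mul]
  by_cases hu : u ∈ S
  · have hAu := adjMatrix_joinCliques_mulVec_add_of_mem (p := p) v hu
    rw [sum_eq_sum_add_sum_cliquePart (S := S) (p := p), hW,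
      sum_congr rfl fun k _ => hσ k] at hAu
    have hsum : ∑ k, a k * (#S / (μ + 1 - a k)) = #S * ∑ k, a k / (μ + 1 - a k) := by
      rw [mul_sum]
      exact sum_congr rfl fun k _ => by ring
    simp only [v, if_pos hu] at hAu ⊢
    linarith
  · have hAu := adjMatrix_joinCliques_mulVec_add_of_notMem (p := p) v hu
    rw [hW, hσ] at hAu
    have hd : μ + 1 - a (p u) ≠ 0 := sub_ne_zero.2 (hμp _)
    simp only [v, if_neg hu] at hAu ⊢
    field_simp at hAu ⊢
    linear_combination hAu

theorem mem_upperBounds_adjEigenvalues_joinCliques {n : ℕ} (hn : 8 ≤ n ∨ n = 4) {θ : ℝ}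
    (hθ : thetaCubic n θ = 0) (hθn : (n : ℝ) - 3 < θ) (hV : Fintype.card V = n)
    (hS : S.Nonempty) (hι : Fintype.card ι = #S + 2) (hp : ∀ k, (cliquePart S p k).Nonempty) :
    θ ∈ upperBounds (adjEigenvalues (joinCliques S p)) := by
  intro μ hμA
  by_contra! hθμ
  set s := #S
  set a : ι → ℝ := fun k => #(cliquePart S p k)
  have ha : ∀ k, 1 ≤ a k := fun k => Nat.one_le_cast.2 (hp k).card_pos
  have hexcess : ∑ k, (a k - 1) + 1 = n - 2 * s - 1 := by
    rw [sum_card_cliquePart_sub_one, hV, hι]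
    push_cast
    ring
  have hs : 1 ≤ s := hS.card_pos
  have hsn : 2 * s + 2 ≤ n := by
    have : (0 : ℝ) ≤ ∑ k, (a k - 1) := sum_nonneg fun k _ => sub_nonneg.2 (ha k)
    exact_mod_cast (by linarith : (2 * s + 2 : ℝ) ≤ n)
  have hs' : (1 : ℝ) ≤ s := by exact_mod_cast hs
  have hsn' : (2 * s + 2 : ℝ) ≤ n := by exact_mod_cast hsn
  have haθ : ∀ k, a k < θ + 1 := fun k => by
    linarith [single_le_sum (fun j _ => sub_nonneg.2 (ha j)) (mem_univ k)]
  have hsec := secular_eq_of_mem_adjEigenvalues_joinCliques hμA (by linarith)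
    fun k => (by linarith [haθ k] : a k < μ + 1).ne'
  have hmono : ∑ k, a k / (μ + 1 - a k) ≤ ∑ k, a k / (θ + 1 - a k) :=
    sum_le_sum fun k _ => div_le_div_of_nonneg_left (by linarith [ha k]) (by linarith [haθ k])
      (by linarith)
  have hsmooth : ∑ k, a k / (θ + 1 - a k) ≤
      (n - 2 * s - 1) / (θ + 1 - (n - 2 * s - 1)) + (s + 1) / θ := by
    have h := sum_div_sub_le univ (fun k _ => ha k) (c := θ + 1) (by linarith)
    rw [hexcess, card_univ, hι] at h
    convert h using 2
    push_cast
    ring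
  have : μ + 1 - s ≤ θ + 1 - s := calc
    μ + 1 - s = s * ∑ k, a k / (μ + 1 - a k) := hsec
    _ ≤ s * ((n - 2 * s - 1) / (θ + 1 - (n - 2 * s - 1)) + (s + 1) / θ) := by
      gcongr
      exact hmono.trans hsmooth
    _ ≤ θ + 1 - s := secular_extremal_le hn hs hsn hθ hθn
  linarith

end JoinCliques

section Components

variable {V : Type*} [Fintype V] {G : SimpleGraph V} {S : Finset V}

lemma SimpleGraph.Connected.nonempty_of_two_le_card_connectedComponent (hG : G.Connected)
    (h : 2 ≤ Nat.card (G.induce (↑S)ᶜ).ConnectedComponent) : S.Nonempty := by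
  rw [nonempty_iff_ne_empty]
  rintro rfl
  rw [coe_empty, Set.compl_empty] at h
  have := hG.preconnected.subsingleton_connectedComponent
  have := Finite.card_le_one_iff_subsingleton.2
    (induceUnivIso G).connectedComponentEquiv.subsingleton
  omega

variable [DecidableEq V]

lemma exists_le_joinCliques {m : ℕ} [NeZero m]
    (hm : m ≤ Nat.card (G.induce (↑S)ᶜ).ConnectedComponent) :
    ∃ p : V → Fin m, (∀ k, (cliquePart S p k).Nonempty) ∧ G ≤ joinCliques S p := by
  classical
  obtain ⟨e⟩ : Nonempty (Fin m ↪ (G.induce (↑S)ᶜ).ConnectedComponent) :=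
    Function.Embedding.nonempty_of_card_le (by simpa [Nat.card_eq_fintype_card] using hm)
  have hf : (Function.invFun e).Surjective := Function.invFun_surjective e.injective
  let p : V → Fin m := fun v =>
    if hv : v ∈ S then 0 else Function.invFun e ((G.induce (↑S)ᶜ).connectedComponentMk ⟨v, hv⟩)
  refine ⟨p, fun k => ?_, fun u v huv => ⟨G.ne_of_adj huv, ?_⟩⟩
  · obtain ⟨c, rfl⟩ := hf k
    obtain ⟨⟨w, hw⟩, rfl⟩ := c.exists_rep
    have hw' : w ∉ S := hw
    exact ⟨w, mem_cliquePart.2 ⟨hw', by simp only [p, dif_neg hw']; rfl⟩⟩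
  · by_cases hu : u ∈ S
    · exact Or.inl hu
    by_cases hv : v ∈ S
    · exact Or.inr (Or.inl hv)
    refine Or.inr (Or.inr ?_)
    simp only [p, dif_neg hu, dif_neg hv]
    congr 1
    exact ConnectedComponent.sound (Adj.reachable (by simpa using huv))

end Components

section Extremal

variable (m : ℕ)

def extremalPart : Fin 1 ⊕ (Fin m ⊕ Fin 2) → Fin 3 :=
  Sum.elim (fun _ => 0) (Sum.elim (fun _ => 0) Fin.succ)

lemma gJoin_eq_joinCliques :
    gJoin (⊤ : SimpleGraph (Fin 1)) ((⊤ : SimpleGraph (Fin m)) ⊕g (⊥ : SimpleGraph (Fin 2))) =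
      joinCliques {Sum.inl 0} (extremalPart m) := by
  ext u v
  rcases u with a | x | x <;> rcases v with b | y | y <;>
    simp [gJoin, extremalPart, Fin.fin_one_eq_zero, (Fin.succ_ne_zero _).symm]

lemma card_cliquePart_extremalPart_of_ne_zero {k : Fin 3} (hk : k ≠ 0) :
    #(cliquePart {Sum.inl 0} (extremalPart m) k) = 1 := by
  obtain ⟨j, rfl⟩ := Fin.exists_succ_eq.2 hk
  rw [card_eq_one]
  refine ⟨Sum.inr (Sum.inr j), ?_⟩
  ext v
  rcases v with a | x | x <;> simp [mem_cliquePart, extremalPart, (Fin.succ_ne_zero _).symm]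

lemma card_cliquePart_extremalPart_zero : #(cliquePart {Sum.inl 0} (extremalPart m) 0) = m := by
  have := sum_card_cliquePart (S := {Sum.inl 0}) (p := extremalPart m)
  rw [Fin.sum_univ_three, card_cliquePart_extremalPart_of_ne_zero m (k := 1) (by decide),
    card_cliquePart_extremalPart_of_ne_zero m (k := 2) (by decide)] at this
  simp only [Fintype.card_sum, Fintype.card_fin, card_singleton] at this
  omega

end Extremal

theorem specRad_gJoin_top_sum_top_bot {n : ℕ} (hn : 8 ≤ n ∨ n = 4) {θ : ℝ}
    (hθ : thetaCubic n θ = 0) (hθn : (n : ℝ) - 3 < θ) :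
    specRad (gJoin (⊤ : SimpleGraph (Fin 1))
      ((⊤ : SimpleGraph (Fin (n - 3))) ⊕g (⊥ : SimpleGraph (Fin 2)))) = θ := by
  have hn3 : 3 < n := by omega
  have hm : ((n - 3 : ℕ) : ℝ) = n - 3 := by rw [Nat.cast_sub hn3.le]; norm_num
  have hS : ({Sum.inl 0} : Finset (Fin 1 ⊕ (Fin (n - 3) ⊕ Fin 2))).Nonempty :=
    singleton_nonempty _
  have ha : ∀ k, 1 ≤ #(cliquePart {Sum.inl 0} (extremalPart (n - 3)) k) ∧
      #(cliquePart {Sum.inl 0} (extremalPart (n - 3)) k) ≤ n - 3 := fun k => by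
    rcases eq_or_ne k 0 with rfl | hk
    · rw [card_cliquePart_extremalPart_zero]; omega
    · rw [card_cliquePart_extremalPart_of_ne_zero _ hk]; omega
  rw [gJoin_eq_joinCliques, specRad_eq_of_isGreatest]
  refine ⟨mem_adjEigenvalues_joinCliques_of_secular hS (fun k => ?_) ?_,
    mem_upperBounds_adjEigenvalues_joinCliques hn hθ hθn (by simp; omega) hS (by simp)
      fun k => card_pos.1 (ha k).1⟩
  · have : (#(cliquePart {Sum.inl 0} (extremalPart (n - 3)) k) : ℝ) ≤ n - 3 := by
      rw [← hm]; exact_mod_cast (ha k).2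
    exact (by linarith : _ < θ + 1).ne'
  · rw [Fin.sum_univ_three, card_cliquePart_extremalPart_zero,
      card_cliquePart_extremalPart_of_ne_zero _ (k := 1) (by decide),
      card_cliquePart_extremalPart_of_ne_zero _ (k := 2) (by decide), hm, card_singleton]
    have : θ + 1 - (n - 3) ≠ 0 := by linarith
    have : θ ≠ 0 := by linarith
    simp only [Nat.cast_one, one_mul, add_sub_cancel_right]
    field_simp
    unfold thetaCubic at hθ
    linear_combination hθ

theorem spectral_bound_of_many_odd_components_general (n : ℕ)
    (hn : 8 ≤ n ∨ n = 4) (G : SimpleGraph (Fin n)) (hconn : G.Connected)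
    (S : Set (Fin n)) (hS : S.ncard + 2 ≤ oddComp (G.induce Sᶜ))
    (θ : ℝ)
    (hθroot : θ ^ 3 - ((n : ℝ) - 4) * θ ^ 2 - ((n : ℝ) - 1) * θ + 2 * ((n : ℝ) - 4) = 0)
    (hθmax : ∀ x : ℝ,
      x ^ 3 - ((n : ℝ) - 4) * x ^ 2 - ((n : ℝ) - 1) * x + 2 * ((n : ℝ) - 4) = 0 → x ≤ θ) :
    specRad G ≤ θ ∧
    specRad (gJoin (⊤ : SimpleGraph (Fin 1))
      ((⊤ : SimpleGraph (Fin (n - 3))) ⊕g (⊥ : SimpleGraph (Fin 2)))) = θ := by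
  classical
  have hθn : (n : ℝ) - 3 < θ := by
    obtain ⟨x, hx, hx0⟩ := exists_thetaCubic_root_gt n
    exact hx.trans_le (hθmax x hx0)
  refine ⟨?_, specRad_gJoin_top_sum_top_bot hn hθroot hθn⟩
  lift S to Finset (Fin n) using S.toFinite
  rw [Set.ncard_coe_finset] at hS
  have hcomp : #S + 2 ≤ Nat.card (G.induce (↑S)ᶜ).ConnectedComponent :=
    hS.trans (Finite.card_subtype_le _)
  obtain ⟨p, hp, hGp⟩ := exists_le_joinCliques hcomp
  have hSne := hconn.nonempty_of_two_le_card_connectedComponent (S := S) (by omega)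
  have hn4 : (4 : ℝ) ≤ n := by exact_mod_cast (by omega : 4 ≤ n)
  exact specRad_le_s13 (by linarith) <| upperBounds_adjEigenvalues_subset_of_le hGp <|
    mem_upperBounds_adjEigenvalues_joinCliques hn hθroot hθn (Fintype.card_fin n) hSne
      (Fintype.card_fin _) hp

theorem spectral_bound_of_many_odd_components (n : ℕ) (hnev : Even n)
    (hn : 8 ≤ n ∨ n = 4) (G : SimpleGraph (Fin n)) (hconn : G.Connected)
    (S : Set (Fin n)) (hS : S.ncard + 2 ≤ oddComp (G.induce Sᶜ))
    (θ : ℝ)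
    (hθroot : θ ^ 3 - ((n : ℝ) - 4) * θ ^ 2 - ((n : ℝ) - 1) * θ + 2 * ((n : ℝ) - 4) = 0)
    (hθmax : ∀ x : ℝ,
      x ^ 3 - ((n : ℝ) - 4) * x ^ 2 - ((n : ℝ) - 1) * x + 2 * ((n : ℝ) - 4) = 0 → x ≤ θ) :
    specRad G ≤ θ ∧
    specRad (gJoin (⊤ : SimpleGraph (Fin 1))
      ((⊤ : SimpleGraph (Fin (n - 3))) ⊕g (⊥ : SimpleGraph (Fin 2)))) = θ :=
  spectral_bound_of_many_odd_components_general n hn G hconn S hS θ hθroot hθmax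
end

section
/- Let s, k, t, m, n_1, ..., n_t be positive integers with n_1 ≥ n_2 ≥ ... ≥ n_t ≥ k, let H be a graph on m vertices, and let n = n_1 + ... + n_t + s + m. Then the number of edges of K_s ∨ (H ∪ K_{n_1} ∪ ... ∪ K_{n_t}) is at most the number of edges of K_s ∨ (H ∪ K_{n−m−s−k(t−1)} ∪ (t−1)K_k), with equality if and only if n_2 = n_3 = ... = n_t = k. -/
/-!
Only the term `∑ C(nᵢ, 2)` of the edge count `C(s,2) + e(H) + s(m + ∑ nᵢ) + ∑ C(nᵢ, 2)` depends
on the clique sizes, and `∑ nᵢ` is fixed. Write `nᵢ = k + aᵢ` for `i ≠ 1`. Since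
`C(a + b, 2) = C(a, 2) + C(b, 2) + ab` and `∑ C(aᵢ, 2) ≤ C(∑ aᵢ, 2)`, moving every excess `aᵢ`
into the first clique gains at least `(n₁ - k) ∑ aᵢ`. This is zero only if all `aᵢ = 0`, or if
`n₁ = k`, and then `nᵢ ≤ n₁` gives `aᵢ = 0` as well.
-/

open SimpleGraph

/-- The disjoint union of complete graphs `K_{n 0} ∪ … ∪ K_{n (t-1)}`. -/
def cliqueUnion {t : ℕ} (n : Fin t → ℕ) : SimpleGraph (Σ i, Fin (n i)) where
  Adj x y := x.1 = y.1 ∧ x ≠ y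
  symm := ⟨fun _ _ h => ⟨h.1.symm, h.2.symm⟩⟩
  loopless := ⟨fun _ h => h.2 rfl⟩

namespace SimpleGraph

variable {α β : Type*}

@[simp] lemma gJoin_adj_inl_inl (G : SimpleGraph α) (K : SimpleGraph β) (a b : α) :
    (gJoin G K).Adj (.inl a) (.inl b) ↔ G.Adj a b := by simp [gJoin]

@[simp] lemma gJoin_adj_inl_inr (G : SimpleGraph α) (K : SimpleGraph β) (a : α) (b : β) :
    (gJoin G K).Adj (.inl a) (.inr b) := by simp [gJoin]

@[simp] lemma gJoin_adj_inr_inl (G : SimpleGraph α) (K : SimpleGraph β) (b : β) (a : α) :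
    (gJoin G K).Adj (.inr b) (.inl a) := by simp [gJoin]

@[simp] lemma gJoin_adj_inr_inr (G : SimpleGraph α) (K : SimpleGraph β) (a b : β) :
    (gJoin G K).Adj (.inr a) (.inr b) ↔ K.Adj a b := by simp [gJoin]

lemma two_mul_ncard_edgeSet [Fintype α] (G : SimpleGraph α) [DecidableRel G.Adj] :
    2 * G.edgeSet.ncard = ∑ v, ∑ w, if G.Adj v w then 1 else 0 := by
  classical
  rw [Set.ncard_eq_toFinset_card', ← edgeFinset, ← sum_degrees_eq_twice_card_edges]
  refine Finset.sum_congr rfl fun v _ => ?_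
  rw [← card_neighborFinset_eq_degree, neighborFinset_eq_filter, Finset.card_filter]

lemma ncard_edgeSet_top [Finite α] :
    (⊤ : SimpleGraph α).edgeSet.ncard = (Nat.card α).choose 2 := by
  rw [edgeSet_top, Sym2.ncard_diagSet_compl]

variable [Fintype α] [Fintype β]

lemma ncard_edgeSet_sum (G : SimpleGraph α) (K : SimpleGraph β) :
    (G ⊕g K).edgeSet.ncard = G.edgeSet.ncard + K.edgeSet.ncard := by
  classical
  have h := two_mul_ncard_edgeSet (G ⊕g K)
  simp only [Fintype.sum_sum_type, sum_adj, if_false, Finset.sum_const_zero, add_zero,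
    zero_add] at h
  rw [← two_mul_ncard_edgeSet G, ← two_mul_ncard_edgeSet K] at h
  omega

lemma ncard_edgeSet_gJoin (G : SimpleGraph α) (K : SimpleGraph β) :
    (gJoin G K).edgeSet.ncard =
      G.edgeSet.ncard + K.edgeSet.ncard + Fintype.card α * Fintype.card β := by
  classical
  have h := two_mul_ncard_edgeSet (gJoin G K)
  simp only [Fintype.sum_sum_type, gJoin_adj_inl_inl, gJoin_adj_inl_inr, gJoin_adj_inr_inl,
    gJoin_adj_inr_inr, if_true, Finset.sum_const, Finset.card_univ, smul_eq_mul, mul_one,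
    Finset.sum_add_distrib] at h
  rw [← two_mul_ncard_edgeSet G, ← two_mul_ncard_edgeSet K] at h
  linarith [mul_comm (Fintype.card α) (Fintype.card β)]

lemma cliqueUnion_adj_mk_mk_self {t : ℕ} {n : Fin t → ℕ} {i : Fin t} {a b : Fin (n i)} :
    (cliqueUnion n).Adj ⟨i, a⟩ ⟨i, b⟩ ↔ a ≠ b := by
  simp [cliqueUnion]

lemma ncard_edgeSet_cliqueUnion {t : ℕ} (n : Fin t → ℕ) :
    (cliqueUnion n).edgeSet.ncard = ∑ i, (n i).choose 2 := by
  classical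
  have hrow (i : Fin t) (a : Fin (n i)) :
      (∑ j, ∑ b : Fin (n j), if (cliqueUnion n).Adj ⟨i, a⟩ ⟨j, b⟩ then 1 else 0) =
        ∑ b, if (⊤ : SimpleGraph (Fin (n i))).Adj a b then 1 else 0 := by
    rw [Finset.sum_eq_single i]
    · simp only [cliqueUnion_adj_mk_mk_self, top_adj]
    · intro j _ hji
      exact Finset.sum_eq_zero fun b _ => if_neg fun h => hji h.1.symm
    · simp
  suffices 2 * (cliqueUnion n).edgeSet.ncard = 2 * ∑ i, (n i).choose 2 by omega
  rw [two_mul_ncard_edgeSet, Finset.mul_sum, Fintype.sum_sigma]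
  refine Finset.sum_congr rfl fun i _ => ?_
  simp only [Fintype.sum_sigma, hrow]
  rw [← two_mul_ncard_edgeSet, ncard_edgeSet_top, Nat.card_fin]

lemma ncard_edgeSet_gJoin_top_sum_cliqueUnion (s m : ℕ) (H : SimpleGraph (Fin m)) {t : ℕ}
    (n : Fin t → ℕ) :
    (gJoin (⊤ : SimpleGraph (Fin s)) (H ⊕g cliqueUnion n)).edgeSet.ncard =
      s.choose 2 + H.edgeSet.ncard + ∑ i, (n i).choose 2 + s * (m + ∑ i, n i) := by
  simp only [ncard_edgeSet_gJoin, ncard_edgeSet_sum, ncard_edgeSet_cliqueUnion, ncard_edgeSet_top,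
    Nat.card_fin, Fintype.card_fin, Fintype.card_sum, Fintype.card_sigma]
  ring

end SimpleGraph

lemma Nat.add_choose_two (a b : ℕ) : (a + b).choose 2 = a.choose 2 + b.choose 2 + a * b := by
  induction b with
  | zero => simp
  | succ b ih =>
    rw [← add_assoc, Nat.choose_succ_succ', Nat.choose_succ_succ', ih, Nat.choose_one_right,
      Nat.choose_one_right]
    ring

namespace Finset

variable {ι : Type*}

lemma sum_choose_two_le_choose_two_sum (s : Finset ι) (a : ι → ℕ) :
    ∑ i ∈ s, (a i).choose 2 ≤ (∑ i ∈ s, a i).choose 2 := by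
  classical
  induction s using Finset.induction_on with
  | empty => simp
  | insert j s hj ih =>
    rw [sum_insert hj, sum_insert hj, Nat.add_choose_two]
    omega

lemma choose_two_add_sum_choose_two_add_le (s : Finset ι) (a : ι → ℕ) {k x : ℕ} (hkx : k ≤ x) :
    x.choose 2 + ∑ i ∈ s, (k + a i).choose 2 + (x - k) * ∑ i ∈ s, a i ≤
      (x + ∑ i ∈ s, a i).choose 2 + #s * k.choose 2 := by
  obtain ⟨d, rfl⟩ := Nat.exists_eq_add_of_le hkx
  simp only [Nat.add_choose_two, sum_add_distrib, sum_const, smul_eq_mul, ← mul_sum,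
    Nat.add_sub_cancel_left]
  have := sum_choose_two_le_choose_two_sum s a
  nlinarith

variable [Fintype ι] [DecidableEq ι]

lemma sum_ite_eq_add_card_sub_one_nsmul {M : Type*} [AddCommMonoid M] (i₀ : ι) (x y : M) :
    ∑ i, (if i = i₀ then x else y) = x + (Fintype.card ι - 1) • y := by
  rw [sum_ite, filter_eq', filter_ne', if_pos (mem_univ i₀), sum_singleton, sum_const,
    card_erase_of_mem (mem_univ i₀), card_univ]

lemma sum_choose_two_add_le (f : ι → ℕ) (i₀ : ι) {k : ℕ} (hk : ∀ i, k ≤ f i) :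
    ∑ i, (f i).choose 2 + (f i₀ - k) * ∑ i ∈ univ.erase i₀, (f i - k) ≤
      (∑ i, f i - k * (Fintype.card ι - 1)).choose 2 + (Fintype.card ι - 1) * k.choose 2 := by
  have hf : ∀ i, f i = k + (f i - k) := fun i => (Nat.add_sub_cancel' (hk i)).symm
  have hcard : #(univ.erase i₀) = Fintype.card ι - 1 := by
    rw [card_erase_of_mem (mem_univ i₀), card_univ]
  have htotal : ∑ i, f i - k * (Fintype.card ι - 1) = f i₀ + ∑ i ∈ univ.erase i₀, (f i - k) := by
    rw [← add_sum_erase _ _ (mem_univ i₀), sum_congr rfl fun i _ => hf i, sum_add_distrib,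
      sum_const, hcard, smul_eq_mul, mul_comm k]
    omega
  rw [htotal, ← add_sum_erase _ _ (mem_univ i₀),
    sum_congr rfl fun i _ => congrArg (·.choose 2) (hf i), ← hcard]
  exact choose_two_add_sum_choose_two_add_le _ _ (hk i₀)

end Finset

open Finset in
theorem size_clique_union_join_general (s k t m : ℕ)
    (ht : 0 < t) (nf : Fin t → ℕ)
    (hmono : ∀ i j : Fin t, i ≤ j → nf j ≤ nf i) (hnk : ∀ i, k ≤ nf i)
    (H : SimpleGraph (Fin m)) (n : ℕ) (hn : n = (∑ i, nf i) + s + m) :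
    (gJoin (⊤ : SimpleGraph (Fin s)) (H ⊕g cliqueUnion nf)).edgeSet.ncard ≤
      (gJoin (⊤ : SimpleGraph (Fin s)) (H ⊕g cliqueUnion
        (fun i : Fin t => if i = ⟨0, ht⟩ then n - m - s - k * (t - 1) else k))).edgeSet.ncard ∧
    ((gJoin (⊤ : SimpleGraph (Fin s)) (H ⊕g cliqueUnion nf)).edgeSet.ncard =
      (gJoin (⊤ : SimpleGraph (Fin s)) (H ⊕g cliqueUnion
        (fun i : Fin t => if i = ⟨0, ht⟩ then n - m - s - k * (t - 1) else k))).edgeSet.ncard ↔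
      ∀ i : Fin t, i ≠ ⟨0, ht⟩ → nf i = k) := by
  set z : Fin t := ⟨0, ht⟩
  rw [show n - m - s = ∑ i, nf i by omega]
  have hkt : k * (t - 1) ≤ ∑ i, nf i := calc
    k * (t - 1) ≤ k * t := Nat.mul_le_mul_left k (Nat.sub_le t 1)
    _ = ∑ _i : Fin t, k := by simp [mul_comm]
    _ ≤ ∑ i, nf i := sum_le_sum fun i _ => hnk i
  have hsum : ∑ i : Fin t, (if i = z then ∑ i, nf i - k * (t - 1) else k) = ∑ i, nf i := by
    rw [sum_ite_eq_add_card_sub_one_nsmul, Fintype.card_fin, smul_eq_mul, mul_comm (t - 1)]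
    omega
  have hchoose : ∑ i : Fin t, (if i = z then ∑ i, nf i - k * (t - 1) else k).choose 2 =
      (∑ i, nf i - k * (t - 1)).choose 2 + (t - 1) * k.choose 2 := by
    simp only [apply_ite (Nat.choose · 2)]
    rw [sum_ite_eq_add_card_sub_one_nsmul, Fintype.card_fin, smul_eq_mul]
  have hslack := sum_choose_two_add_le nf z hnk
  rw [Fintype.card_fin] at hslack
  simp only [ncard_edgeSet_gJoin_top_sum_cliqueUnion, hsum, hchoose]
  refine ⟨by omega, fun heq i hi => ?_, fun hall => ?_⟩
  · have := hnk i
    rcases Nat.mul_eq_zero.1 (show (nf z - k) * ∑ i ∈ univ.erase z, (nf i - k) = 0 by omega)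
      with hz | hrest
    · have := hmono z i (Nat.zero_le _)
      omega
    · have := sum_eq_zero_iff.1 hrest i (mem_erase.2 ⟨hi, mem_univ i⟩)
      omega
  · have hnf : nf = fun i => if i = z then nf z else k :=
      funext fun i => by split_ifs with h <;> simp [h, hall]
    have htotal : ∑ i, nf i = nf z + (t - 1) * k := by
      conv_lhs => rw [hnf]
      rw [sum_ite_eq_add_card_sub_one_nsmul, Fintype.card_fin, smul_eq_mul]
    have hclique : ∑ i, (nf i).choose 2 = (nf z).choose 2 + (t - 1) * k.choose 2 := by
      conv_lhs => rw [hnf]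
      simp only [apply_ite (Nat.choose · 2)]
      rw [sum_ite_eq_add_card_sub_one_nsmul, Fintype.card_fin, smul_eq_mul]
    rw [hclique, htotal, mul_comm k, Nat.add_sub_cancel]

theorem size_clique_union_join (s k t m : ℕ) (hs : 0 < s) (hk : 0 < k)
    (ht : 0 < t) (hm : 0 < m) (nf : Fin t → ℕ)
    (hmono : ∀ i j : Fin t, i ≤ j → nf j ≤ nf i) (hnk : ∀ i, k ≤ nf i)
    (H : SimpleGraph (Fin m)) (n : ℕ) (hn : n = (∑ i, nf i) + s + m) :
    (gJoin (⊤ : SimpleGraph (Fin s)) (H ⊕g cliqueUnion nf)).edgeSet.ncard ≤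
      (gJoin (⊤ : SimpleGraph (Fin s)) (H ⊕g cliqueUnion
        (fun i : Fin t => if i = ⟨0, ht⟩ then n - m - s - k * (t - 1) else k))).edgeSet.ncard ∧
    ((gJoin (⊤ : SimpleGraph (Fin s)) (H ⊕g cliqueUnion nf)).edgeSet.ncard =
      (gJoin (⊤ : SimpleGraph (Fin s)) (H ⊕g cliqueUnion
        (fun i : Fin t => if i = ⟨0, ht⟩ then n - m - s - k * (t - 1) else k))).edgeSet.ncard ↔
      ∀ i : Fin t, i ≠ ⟨0, ht⟩ → nf i = k) :=
  size_clique_union_join_general s k t m ht nf hmono hnk H n hn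
end

section
/- Let l be an even positive integer and let p, q be odd integers with p, q ≥ 3 and p + q = l. Then the adjacency spectral radius of K_p + K_q is at most that of K_3 + K_{l-3}, with equality if and only if p = 3 or q = 3. -/
/-!
Look at an eigenvector `x` of a graph for the eigenvalue `μ` at a vertex where `|x|` is
maximal: the eigenvalue equation gives `|μ| ≤ Δ`, and equality forces every neighbour of that
vertex to be maximal as well, hence of degree `Δ`. In `K_p + K_q` with `p, q ≥ 3` every vertex
has a neighbour of degree `< max p q`, so `ρ(K_p + K_q) < max p q`. The Rayleigh quotient of
the indicator of the clique `K_{l-3}` gives `ρ(K_3 + K_{l-3}) ≥ l - 4`, which beats `max p q`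
as soon as `p, q ≥ 4`; when `p = 3` or `q = 3` the two graphs are isomorphic.
-/

open SimpleGraph

/-- `K_p + K_q`: the disjoint union of `K_p` and `K_q` together with one extra
edge joining a vertex of `K_p` to a vertex of `K_q`. -/
def KplusK (p q : ℕ) (hp : 0 < p) (hq : 0 < q) : SimpleGraph (Fin p ⊕ Fin q) :=
  ((⊤ : SimpleGraph (Fin p)) ⊕g (⊤ : SimpleGraph (Fin q))) ⊔
    SimpleGraph.fromEdgeSet {s(Sum.inl ⟨0, hp⟩, Sum.inr ⟨0, hq⟩)}

open Matrix

namespace Matrix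

variable {n : Type*} [Fintype n] [DecidableEq n]

theorem mem_spectrum_iff_exists_mulVec_eq_smul {K : Type*} [Field K] {A : Matrix n n K}
    {μ : K} : μ ∈ spectrum K A ↔ ∃ v, v ≠ 0 ∧ A *ᵥ v = μ • v := by
  rw [← spectrum_toLin', ← Module.End.hasEigenvalue_iff_mem_spectrum]
  constructor
  · intro h
    obtain ⟨v, hv⟩ := h.exists_hasEigenvector
    exact ⟨v, hv.2, Module.End.mem_eigenspace_iff.1 hv.1⟩
  · rintro ⟨v, hv, hAv⟩
    exact Module.End.hasEigenvalue_of_hasEigenvector ⟨Module.End.mem_eigenspace_iff.2 hAv, hv⟩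

theorem IsHermitian.dotProduct_mulVec_le {A : Matrix n n ℝ} (hA : A.IsHermitian) {c : ℝ}
    (hc : ∀ μ ∈ spectrum ℝ A, μ ≤ c) (v : n → ℝ) : v ⬝ᵥ A *ᵥ v ≤ c * (v ⬝ᵥ v) := by
  have hpsd : (algebraMap ℝ (Matrix n n ℝ) c - A).PosSemidef := by
    refine posSemidef_iff_isHermitian_and_spectrum_nonneg.2 ⟨?_, ?_⟩
    · exact (IsSelfAdjoint.algebraMap _ (.all c)).sub hA
    · rw [← spectrum.singleton_sub_eq]
      rintro _ ⟨_, rfl, μ, hμ, rfl⟩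
      exact sub_nonneg.2 (hc μ hμ)
  have := hpsd.dotProduct_mulVec_nonneg v
  rw [Algebra.algebraMap_eq_smul_one, sub_mulVec, smul_mulVec, one_mulVec, dotProduct_sub,
    dotProduct_smul] at this
  simpa using this

end Matrix

namespace SimpleGraph

variable {V : Type*} [Fintype V] {G : SimpleGraph V} [DecidableRel G.Adj]

theorem abs_lt_of_adjMatrix_mulVec_eq_smul {Δ : ℕ} (hdeg : ∀ v, G.degree v ≤ Δ)
    (hnb : ∀ v, ∃ w, G.Adj v w ∧ G.degree w < Δ) {x : V → ℝ} {μ : ℝ} (hx : x ≠ 0)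
    (hμ : G.adjMatrix ℝ *ᵥ x = μ • x) : |μ| < Δ := by
  obtain ⟨k, hk⟩ := Function.ne_iff.1 hx
  have : Nonempty V := ⟨k⟩
  obtain ⟨i, hi⟩ := Finite.exists_max fun j => |x j|
  set m := |x i|
  have hm : 0 < m := (abs_pos.2 hk).trans_le (hi k)
  have h_eigen : ∀ j, |μ| * |x j| ≤ ∑ u ∈ G.neighborFinset j, |x u| := fun j => by
    rw [← abs_mul, ← smul_eq_mul, ← Pi.smul_apply, ← hμ, adjMatrix_mulVec_apply]
    exact Finset.abs_sum_le_sum_abs _ _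
  by_contra! hΔ
  obtain ⟨j, hij, hj⟩ := hnb i
  have hxj : |x j| = m := by
    by_contra hne
    have hlt : ∑ u ∈ G.neighborFinset i, |x u| < G.degree i * m := by
      rw [← card_neighborFinset_eq_degree, ← nsmul_eq_mul, ← Finset.sum_const]
      exact Finset.sum_lt_sum (fun u _ => hi u)
        ⟨j, (mem_neighborFinset _ _ _).2 hij, lt_of_le_of_ne (hi j) hne⟩
    have : |μ| * m < |μ| * m := calc
      |μ| * m ≤ ∑ u ∈ G.neighborFinset i, |x u| := h_eigen i
      _ < G.degree i * m := hlt
      _ ≤ Δ * m := by gcongr; exact_mod_cast hdeg i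
      _ ≤ |μ| * m := by gcongr
    exact lt_irrefl _ this
  have : |μ| * m < |μ| * m := calc
    |μ| * m = |μ| * |x j| := by rw [hxj]
    _ ≤ ∑ u ∈ G.neighborFinset j, |x u| := h_eigen j
    _ ≤ G.degree j * m := by
      rw [← card_neighborFinset_eq_degree, ← nsmul_eq_mul]
      exact Finset.sum_le_card_nsmul _ _ _ fun u _ => hi u
    _ < Δ * m := by gcongr
    _ ≤ |μ| * m := by gcongr
  exact lt_irrefl _ this

variable [DecidableEq V]

variable (G) in
theorem specRad_eq_sSup_spectrum : specRad G = sSup (spectrum ℝ (G.adjMatrix ℝ)) := by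
  unfold specRad
  congr 1 with μ
  rw [Set.mem_ofPred_eq, mem_spectrum_iff_exists_mulVec_eq_smul, adjMatrix]
  congr!

variable (G) in
theorem specRad_mem_spectrum [Nonempty V] : specRad G ∈ spectrum ℝ (G.adjMatrix ℝ) := by
  rw [specRad_eq_sSup_spectrum]
  refine Set.Nonempty.csSup_mem ?_ finite_real_spectrum
  rw [(G.isHermitian_adjMatrix ℝ).spectrum_real_eq_range_eigenvalues]
  exact Set.range_nonempty _

variable (G) in
theorem dotProduct_adjMatrix_mulVec_le (v : V → ℝ) :
    v ⬝ᵥ G.adjMatrix ℝ *ᵥ v ≤ specRad G * (v ⬝ᵥ v) :=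
  (G.isHermitian_adjMatrix ℝ).dotProduct_mulVec_le
    (fun _ hμ => G.specRad_eq_sSup_spectrum ▸ le_csSup finite_real_spectrum.bddAbove hμ) v

theorem Iso.specRad_eq {W : Type*} [Fintype W] [DecidableEq W] {H : SimpleGraph W}
    [DecidableRel H.Adj] (e : G ≃g H) : specRad G = specRad H := by
  rw [specRad_eq_sSup_spectrum, specRad_eq_sSup_spectrum, ← e.reindex_adjMatrix (α := ℝ),
    ← coe_reindexAlgEquiv ℝ ℝ, AlgEquiv.spectrum_eq]

theorem IsNClique.sub_one_le_specRad {k : ℕ} {s : Finset V} (hs : G.IsNClique k s)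
    (hk : 0 < k) : (k : ℝ) - 1 ≤ specRad G := by
  set v : V → ℝ := fun i => if i ∈ s then 1 else 0
  have hAv : ∀ i ∈ s, (G.adjMatrix ℝ *ᵥ v) i = k - 1 := fun i hi => by
    have : {u ∈ G.neighborFinset i | u ∈ s} = s.erase i := by
      ext u
      simp only [Finset.mem_filter, mem_neighborFinset, Finset.mem_erase]
      exact ⟨fun h => ⟨(G.ne_of_adj h.1).symm, h.2⟩, fun h => ⟨hs.1 hi h.2 h.1.symm, h.2⟩⟩
    rw [adjMatrix_mulVec_apply, Finset.sum_boole, this, Finset.card_erase_of_mem hi, hs.2,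
      Nat.cast_pred hk]
  have hvAv : v ⬝ᵥ G.adjMatrix ℝ *ᵥ v = k * (k - 1) := by
    simp only [dotProduct, v, ite_mul, one_mul, zero_mul, Finset.sum_ite_mem, Finset.univ_inter]
    rw [Finset.sum_congr rfl hAv, Finset.sum_const, hs.2, nsmul_eq_mul]
  have hvv : v ⬝ᵥ v = k := by
    simp [dotProduct, v, hs.2]
  have := G.dotProduct_adjMatrix_mulVec_le v
  rw [hvAv, hvv] at this
  have hk' : (0 : ℝ) < k := by exact_mod_cast hk
  nlinarith

end SimpleGraph

namespace KplusK

variable {p q : ℕ} {hp : 0 < p} {hq : 0 < q}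

@[simp] theorem adj_inl_inl {a b : Fin p} :
    (KplusK p q hp hq).Adj (.inl a) (.inl b) ↔ a ≠ b := by
  simp [KplusK]

@[simp] theorem adj_inr_inr {a b : Fin q} :
    (KplusK p q hp hq).Adj (.inr a) (.inr b) ↔ a ≠ b := by
  simp [KplusK]

@[simp] theorem adj_inl_inr {a : Fin p} {b : Fin q} :
    (KplusK p q hp hq).Adj (.inl a) (.inr b) ↔ a = ⟨0, hp⟩ ∧ b = ⟨0, hq⟩ := by
  simp [KplusK]

@[simp] theorem adj_inr_inl {a : Fin q} {b : Fin p} :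
    (KplusK p q hp hq).Adj (.inr a) (.inl b) ↔ b = ⟨0, hp⟩ ∧ a = ⟨0, hq⟩ := by
  simp [KplusK, and_comm]

def swapIso : KplusK p q hp hq ≃g KplusK q p hq hp where
  toEquiv := Equiv.sumComm _ _
  map_rel_iff' := by rintro (a | a) (b | b) <;> simp [and_comm]

open scoped Classical in
theorem degree_inl (a : Fin p) :
    (KplusK p q hp hq).degree (.inl a) = p - 1 + if a = ⟨0, hp⟩ then 1 else 0 := by
  rw [← card_neighborFinset_eq_degree, neighborFinset_eq_filter, Finset.card_filter,
    Fintype.sum_sum_type]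
  by_cases h : a = ⟨0, hp⟩ <;>
    simp [h, Finset.sum_ite, Finset.filter_not, Finset.filter_eq, Finset.card_univ_sdiff]

open scoped Classical in
theorem degree_inr (a : Fin q) :
    (KplusK p q hp hq).degree (.inr a) = q - 1 + if a = ⟨0, hq⟩ then 1 else 0 := by
  rw [← card_neighborFinset_eq_degree, neighborFinset_eq_filter, Finset.card_filter,
    Fintype.sum_sum_type]
  by_cases h : a = ⟨0, hq⟩ <;>
    simp [h, Finset.sum_ite, Finset.filter_not, Finset.filter_eq, Finset.card_univ_sdiff, add_comm]

theorem specRad_comm : specRad (KplusK p q hp hq) = specRad (KplusK q p hq hp) := by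
  classical exact swapIso.specRad_eq

theorem sub_one_le_specRad : (q : ℝ) - 1 ≤ specRad (KplusK p q hp hq) := by
  classical
  refine IsNClique.sub_one_le_specRad (s := Finset.univ.map .inr)
    ⟨fun a ha b hb hab => ?_, by simp⟩ hq
  simp only [Finset.coe_map, Finset.coe_univ, Set.image_univ, Set.mem_range] at ha hb
  obtain ⟨a, rfl⟩ := ha
  obtain ⟨b, rfl⟩ := hb
  simpa using hab

theorem specRad_lt_max (h3p : 3 ≤ p) (h3q : 3 ≤ q) :
    specRad (KplusK p q hp hq) < (max p q : ℕ) := by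
  classical
  have : Nonempty (Fin p ⊕ Fin q) := ⟨.inl ⟨0, hp⟩⟩
  obtain ⟨x, hx, hμ⟩ :=
    mem_spectrum_iff_exists_mulVec_eq_smul.1 (specRad_mem_spectrum (KplusK p q hp hq))
  refine (le_abs_self _).trans_lt (abs_lt_of_adjMatrix_mulVec_eq_smul ?_ ?_ hx hμ)
  · rintro (a | a) <;> simp only [degree_inl, degree_inr] <;> split_ifs <;> omega
  · rintro (a | a)
    · obtain ⟨b, hba, hb0⟩ := Fin.exists_ne_and_ne_of_two_lt a ⟨0, hp⟩ (by omega)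
      exact ⟨.inl b, by simpa using hba.symm, by simp only [degree_inl, if_neg hb0]; omega⟩
    · obtain ⟨b, hba, hb0⟩ := Fin.exists_ne_and_ne_of_two_lt a ⟨0, hq⟩ (by omega)
      exact ⟨.inr b, by simpa using hba.symm, by simp only [degree_inr, if_neg hb0]; omega⟩

end KplusK

theorem spectral_KplusK_three (l p q : ℕ) (hp : 3 ≤ p) (hq : 3 ≤ q) (hpq : p + q = l) :
    specRad (KplusK p q (by omega) (by omega)) ≤
      specRad (KplusK 3 (l - 3) (by omega) (by omega)) ∧
    (specRad (KplusK p q (by omega) (by omega)) =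
        specRad (KplusK 3 (l - 3) (by omega) (by omega)) ↔ p = 3 ∨ q = 3) := by
  have h_eq : p = 3 ∨ q = 3 → specRad (KplusK p q (by omega) (by omega)) =
      specRad (KplusK 3 (l - 3) (by omega) (by omega)) := by
    -- after `l = _ + 3`, the index `l - 3` reduces definitionally to the other clique size
    rintro (rfl | rfl)
    · obtain rfl : l = q + 3 := by omega
      rfl
    · obtain rfl : l = p + 3 := by omega
      exact KplusK.specRad_comm
  have h_lt : p ≠ 3 → q ≠ 3 → specRad (KplusK p q (by omega) (by omega)) <
      specRad (KplusK 3 (l - 3) (by omega) (by omega)) := by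
    intro hp3 hq3
    calc specRad (KplusK p q _ _) < (max p q : ℕ) := KplusK.specRad_lt_max hp hq
      _ ≤ ((l - 3 : ℕ) : ℝ) - 1 := by
        rw [le_sub_iff_add_le]
        exact_mod_cast (by omega : max p q + 1 ≤ l - 3)
      _ ≤ _ := KplusK.sub_one_le_specRad
  by_cases h3 : p = 3 ∨ q = 3
  · exact ⟨(h_eq h3).le, iff_of_true (h_eq h3) h3⟩
  · push Not at h3
    have := h_lt h3.1 h3.2
    exact ⟨this.le, iff_of_false this.ne (by omega)⟩
end

section
/- For even n ≥ 10, the number of edges of the graph K_s ∨ (K_2 ∪ K_{n-2s-1} ∪ (s-1)K_1), where 2 ≤ s ≤ (n-2)/2, equals s(s+1) + 1 + C(n-s-1, 2), and this is at most C(n-2,2) + 3, with equality if and only if s = 4 and n = 10 (i.e., the graph is K_4 ∨ (K_2 ∪ 4K_1)). -/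
open SimpleGraph

section aux
variable {α β : Type*} (G : SimpleGraph α) (H : SimpleGraph β)

lemma edgeSet_gsum :
    (G ⊕g H).edgeSet = Sym2.map Sum.inl '' G.edgeSet ∪ Sym2.map Sum.inr '' H.edgeSet := by
  ext e
  induction e using Sym2.ind with
  | _ x y =>
    simp only [SimpleGraph.mem_edgeSet, Set.mem_union, Set.mem_image]
    constructor
    · intro h
      cases x <;> cases y <;> simp_all [SimpleGraph.sum_adj]
      · exact Or.inl ⟨s(_, _), h, by simp⟩
      · exact Or.inr ⟨s(_, _), h, by simp⟩
    · rintro (⟨e, he, heq⟩ | ⟨e, he, heq⟩) <;>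
      · induction e using Sym2.ind with
        | _ a b =>
          rw [Sym2.map_pair_eq, Sym2.eq_iff] at heq
          rcases heq with ⟨rfl, rfl⟩ | ⟨rfl, rfl⟩ <;>
            simp_all [SimpleGraph.mem_edgeSet, SimpleGraph.sum_adj, adj_comm]

lemma edgeSet_gJoin :
    (gJoin G H).edgeSet = (G ⊕g H).edgeSet ∪
      (fun p : α × β => s(Sum.inl p.1, Sum.inr p.2)) '' Set.univ := by
  rw [gJoin, SimpleGraph.edgeSet_sup]
  congr 1
  ext e
  induction e using Sym2.ind with
  | _ x y =>
    simp only [SimpleGraph.mem_edgeSet, SimpleGraph.fromRel_adj, Set.mem_image, Set.mem_univ,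
      true_and]
    constructor
    · rintro ⟨hne, h | h⟩
      · cases x <;> cases y <;> simp_all
      · cases x <;> cases y <;> simp_all [Sym2.eq_swap]
    · rintro ⟨⟨a, b⟩, heq⟩
      rw [Sym2.eq_iff] at heq
      rcases heq with ⟨rfl, rfl⟩ | ⟨rfl, rfl⟩ <;> simp

lemma cross_inj : Function.Injective (fun p : α × β => s(Sum.inl p.1, Sum.inr p.2)) := by
  rintro ⟨a, b⟩ ⟨a', b'⟩ h
  simp only [Sym2.eq_iff] at h
  rcases h with ⟨h1, h2⟩ | ⟨h1, h2⟩ <;> simp_all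

lemma ncard_edgeSet_gJoin [Fintype α] [Fintype β] :
    (gJoin G H).edgeSet.ncard =
      G.edgeSet.ncard + H.edgeSet.ncard + Fintype.card α * Fintype.card β := by
  classical
  have hdisj1 : Disjoint (Sym2.map Sum.inl '' G.edgeSet) (Sym2.map Sum.inr '' H.edgeSet) := by
    rw [Set.disjoint_left]
    rintro e ⟨e1, -, rfl⟩ ⟨e2, -, he⟩
    induction e1 using Sym2.ind with
    | _ a b =>
      induction e2 using Sym2.ind with
      | _ c d => simp [Sym2.map_pair_eq, Sym2.eq_iff] at he
  have hdisj2 : Disjoint ((G ⊕g H).edgeSet)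
      ((fun p : α × β => s(Sum.inl p.1, Sum.inr p.2)) '' Set.univ) := by
    rw [Set.disjoint_left, edgeSet_gsum]
    rintro e (⟨e1, -, rfl⟩ | ⟨e1, -, rfl⟩) ⟨⟨a, b⟩, -, he⟩ <;>
    · induction e1 using Sym2.ind with
      | _ c d => simp [Sym2.map_pair_eq, Sym2.eq_iff] at he
  rw [edgeSet_gJoin, Set.ncard_union_eq hdisj2 (Set.toFinite _) (Set.toFinite _),
    edgeSet_gsum, Set.ncard_union_eq hdisj1 (Set.toFinite _) (Set.toFinite _),
    Set.ncard_image_of_injective _ (Sym2.map.injective Sum.inl_injective),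
    Set.ncard_image_of_injective _ (Sym2.map.injective Sum.inr_injective),
    Set.ncard_image_of_injective _ cross_inj, Set.ncard_univ, Nat.card_eq_fintype_card,
    Fintype.card_prod]

lemma ncard_edgeSet_gsum [Fintype α] [Fintype β] :
    (G ⊕g H).edgeSet.ncard = G.edgeSet.ncard + H.edgeSet.ncard := by
  classical
  have hdisj1 : Disjoint (Sym2.map Sum.inl '' G.edgeSet) (Sym2.map Sum.inr '' H.edgeSet) := by
    rw [Set.disjoint_left]
    rintro e ⟨e1, -, rfl⟩ ⟨e2, -, he⟩
    induction e1 using Sym2.ind with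
    | _ a b =>
      induction e2 using Sym2.ind with
      | _ c d => simp [Sym2.map_pair_eq, Sym2.eq_iff] at he
  rw [edgeSet_gsum, Set.ncard_union_eq hdisj1 (Set.toFinite _) (Set.toFinite _),
    Set.ncard_image_of_injective _ (Sym2.map.injective Sum.inl_injective),
    Set.ncard_image_of_injective _ (Sym2.map.injective Sum.inr_injective)]

lemma ncard_edgeSet_top (k : ℕ) : (⊤ : SimpleGraph (Fin k)).edgeSet.ncard = k.choose 2 := by
  rw [Set.ncard_eq_toFinset_card', ← SimpleGraph.edgeFinset,
    SimpleGraph.card_edgeFinset_top_eq_card_choose_two, Fintype.card_fin]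

end aux

lemma two_mul_choose_two (k : ℕ) : 2 * k.choose 2 = k * (k - 1) := by
  induction k with
  | zero => rfl
  | succ k ih =>
    rw [Nat.choose_succ_succ, Nat.choose_one_right, Nat.mul_add, ih]
    cases k with
    | zero => rfl
    | succ j =>
      simp only [Nat.succ_sub_one]
      ring

lemma arith_main (s m : ℕ) (hs : 2 ≤ s) (hm : 1 ≤ m) (hmodd : m % 2 = 1)
    (hbig : 9 ≤ 2 * s + m) :
    (s.choose 2 + (1 + (m.choose 2 + 0)) + s * (2 + (m + (s - 1))) =
        s * (s + 1) + 1 + (m + s).choose 2) ∧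
    (s * (s + 1) + 1 + (m + s).choose 2 ≤ (2 * s + m - 1).choose 2 + 3) ∧
    (s * (s + 1) + 1 + (m + s).choose 2 = (2 * s + m - 1).choose 2 + 3 ↔ s = 4 ∧ m = 1) := by
  have hP := two_mul_choose_two s
  have hM := two_mul_choose_two m
  have hQ := two_mul_choose_two (m + s)
  have hR := two_mul_choose_two (2 * s + m - 1)
  zify [hs, hm, show 1 ≤ s by omega, show 1 ≤ m + s by omega, show 1 ≤ 2*s+m-1 by omega,
    show 1 ≤ 2*s+m by omega, show 2 ≤ 2*s+m by omega] at hP hM hQ hR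
  have hsz : (2:ℤ) ≤ (s:ℤ) := by exact_mod_cast hs
  have hmz : (1:ℤ) ≤ (m:ℤ) := by exact_mod_cast hm
  have h6 : (6:ℤ) ≤ (s:ℤ) + 2 * m := by
    have : 6 ≤ s + 2 * m := by omega
    exact_mod_cast this
  have hprod0 : (0:ℤ) ≤ ((s:ℤ) - 1) * ((s:ℤ) + 2 * m - 6) :=
    mul_nonneg (by linarith) (by linarith)
  refine ⟨?_, ?_, ?_⟩
  · zify [show 1 ≤ s by omega]
    linarith
  · zify
    linarith
  · constructor
    · intro hEq
      have hEqz : ((s:ℤ) * (s + 1) + 1 + ((m + s).choose 2 : ℤ) =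
          ((2 * s + m - 1).choose 2 : ℤ) + 3) := by exact_mod_cast hEq
      have hprod : ((s:ℤ) - 1) * ((s:ℤ) + 2 * m - 6) = 0 := by
        linear_combination -2 * hEqz + hQ - hR
      have h0 : (s:ℤ) + 2 * m - 6 = 0 := by
        rcases mul_eq_zero.mp hprod with h | h
        · exfalso; linarith
        · exact h
      have : s + 2 * m = 6 := by
        have : (s:ℤ) + 2 * m = 6 := by linarith
        exact_mod_cast this
      omega
    · rintro ⟨rfl, rfl⟩
      decide

lemma ncard_edgeSet_bot {V : Type*} : (⊥ : SimpleGraph V).edgeSet.ncard = 0 := by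
  simp [SimpleGraph.edgeSet_bot]

theorem size_join_formula (n s : ℕ) (hnev : Even n) (hn : 10 ≤ n)
    (hs : 2 ≤ s) (hs' : s ≤ (n - 2) / 2) :
    (gJoin (⊤ : SimpleGraph (Fin s)) ((⊤ : SimpleGraph (Fin 2)) ⊕g
        ((⊤ : SimpleGraph (Fin (n - 2 * s - 1))) ⊕g
          (⊥ : SimpleGraph (Fin (s - 1)))))).edgeSet.ncard =
      s * (s + 1) + 1 + (n - s - 1).choose 2 ∧
    (gJoin (⊤ : SimpleGraph (Fin s)) ((⊤ : SimpleGraph (Fin 2)) ⊕g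
        ((⊤ : SimpleGraph (Fin (n - 2 * s - 1))) ⊕g
          (⊥ : SimpleGraph (Fin (s - 1)))))).edgeSet.ncard ≤
      (n - 2).choose 2 + 3 ∧
    ((gJoin (⊤ : SimpleGraph (Fin s)) ((⊤ : SimpleGraph (Fin 2)) ⊕g
        ((⊤ : SimpleGraph (Fin (n - 2 * s - 1))) ⊕g
          (⊥ : SimpleGraph (Fin (s - 1)))))).edgeSet.ncard =
        (n - 2).choose 2 + 3 ↔ s = 4 ∧ n = 10) := by
  have hnm2 := Nat.even_iff.mp hnev
  have h2s : 2 * s + 2 ≤ n := by omega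
  have e1 : n - s - 1 = (n - 2 * s - 1) + s := by omega
  have e2 : n - 2 = 2 * s + (n - 2 * s - 1) - 1 := by omega
  have hE : (gJoin (⊤ : SimpleGraph (Fin s)) ((⊤ : SimpleGraph (Fin 2)) ⊕g
        ((⊤ : SimpleGraph (Fin (n - 2 * s - 1))) ⊕g
          (⊥ : SimpleGraph (Fin (s - 1)))))).edgeSet.ncard =
      s.choose 2 + (1 + ((n - 2 * s - 1).choose 2 + 0)) +
        s * (2 + ((n - 2 * s - 1) + (s - 1))) := by
    rw [ncard_edgeSet_gJoin, ncard_edgeSet_gsum, ncard_edgeSet_gsum, ncard_edgeSet_top,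
      ncard_edgeSet_top, ncard_edgeSet_top, ncard_edgeSet_bot]
    simp [Fintype.card_sum]
  obtain ⟨h1, h2, h3⟩ := arith_main s (n - 2 * s - 1) hs (by omega) (by omega) (by omega)
  rw [hE, e1, e2, h1]
  exact ⟨rfl, h2, by rw [h3]; constructor <;> (rintro ⟨rfl, h⟩; exact ⟨rfl, by omega⟩)⟩
end
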